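/- arXiv:1612.09334 — 5 statements merged into one kernel-verified Lean document; each statement's English description precedes it below -/
import Mathlib

section
/- If M contains all three-element subsets of ℕ, then the canonical basis e₁, e₂, … is a shrinking basis of the completion T*[M,1/2] of (c₀₀, ‖·‖_M): every bounded linear functional x* on T*[M,1/2] satisfies x* = ∑ᵢ x*(eᵢ) eᵢ* in norm, where eᵢ* is the dual basic sequence. -/
/-- A family `E 0, …, E (n-1)` of finite subsets of `ℕ` is `M`-admissible if some `A ∈ M`
(coded as a Boolean-valued function on `ℕ`) contains `m 0 ≤ E 0 < m 1 ≤ E 1 < ⋯ < m (n-1) ≤ E (n-1)`. -/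
def MAdmissible (M : Set (ℕ → Bool)) {n : ℕ} (E : Fin n → Finset ℕ) : Prop :=
  ∃ A ∈ M, ∃ m : Fin n → ℕ,
    (∀ k, A (m k) = true) ∧
    (∀ k, ∀ i ∈ E k, m k ≤ i) ∧
    (∀ (k : Fin n) (h : (k : ℕ) + 1 < n), ∀ i ∈ E k, i < m ⟨(k : ℕ) + 1, h⟩)

open Finsupp in
/-- The smallest absolutely convex subset of `c₀₀` containing all basic vectors `e i`
and closed under `x₁, …, xₙ ↦ (1/2) ∑ₖ Eₖ xₖ` for `M`-admissible families `{E₁, …, Eₙ}`. -/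
inductive Theta (M : Set (ℕ → Bool)) : (ℕ →₀ ℝ) → Prop
  | basis (i : ℕ) : Theta M (Finsupp.single i 1)
  | conv {x y : ℕ →₀ ℝ} {a b : ℝ} (hab : |a| + |b| ≤ 1)
      (hx : Theta M x) (hy : Theta M y) : Theta M (a • x + b • y)
  | adm {n : ℕ} (E : Fin n → Finset ℕ) (x : Fin n → (ℕ →₀ ℝ))
      (hE : MAdmissible M E) (hx : ∀ k, Theta M (x k)) :
      Theta M ((2⁻¹ : ℝ) • ∑ k, ((x k).filter (· ∈ E k)))

/-- The Tsirelson-type norm `‖·‖_M`: the Minkowski gauge of `Θ_M`. -/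
noncomputable def tnorm (M : Set (ℕ → Bool)) (x : ℕ →₀ ℝ) : ℝ :=
  gauge {y | Theta M y} x

/-!
Let `τₙ` be the norm of the tail `x ↦ x*(Pₙ x)` of `x*`, where `Pₙ` restricts to the coordinates
`≥ n`; this is the quantity in the statement, and it decreases in `n`. If it stayed above some
`δ > 0`, then beyond any `n` there would be vectors `v` with `‖v‖ ≤ 1` and `x*(v) ≥ δ`. Three such
vectors of norm `≤ c` with successive supports starting at `m₁ < m₂ < m₃` form an admissible family,
witnessed by `{m₁, m₂, m₃} ∈ M`, so their sum has norm `≤ 2c`; their average thus has norm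
`≤ (2/3) c` while `x*` is still `≥ δ` on it. Iterating gives vectors of norm `≤ (2/3)ᵏ` on which
`x* ≥ δ`, which contradicts the boundedness of `x*`.
-/

open Finsupp Filter Topology Pointwise

theorem gauge_apply_le_of_mapsTo {E : Type*} [AddCommGroup E] [Module ℝ E] {s : Set E}
    (hs : Absorbent ℝ s) (T : E →ₗ[ℝ] E) (hT : Set.MapsTo T s s) (x : E) :
    gauge s (T x) ≤ gauge s x := by
  refine le_of_forall_gt_imp_ge_of_dense fun r hr => ?_
  obtain ⟨b, hb, hbr, y, hy, rfl⟩ := exists_lt_of_gauge_lt hs hr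
  calc gauge s (T (b • y)) ≤ b := gauge_le_of_mem hb.le ⟨T y, hT hy, (map_smul T b y).symm⟩
    _ ≤ r := hbr.le

theorem LinearMap.apply_eq_sum_mul_apply_single {α : Type*} (f : (α →₀ ℝ) →ₗ[ℝ] ℝ)
    {x : α →₀ ℝ} {s : Finset α} (hs : x.support ⊆ s) :
    f x = ∑ i ∈ s, x i * f (Finsupp.single i 1) := by
  conv_lhs => rw [← x.sum_single]
  rw [map_finsuppSum, sum_of_support_subset x hs _ (by simp)]
  exact Finset.sum_congr rfl fun i _ => by rw [← smul_single_one, map_smul, smul_eq_mul]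

theorem sub_sum_range_eq_apply_filter (f : (ℕ →₀ ℝ) →ₗ[ℝ] ℝ) (x : ℕ →₀ ℝ) (n : ℕ) :
    f x - ∑ i ∈ Finset.range n, x i * f (Finsupp.single i 1) = f (x.filter (n ≤ ·)) := by
  have head : f (x.filter (¬n ≤ ·)) = ∑ i ∈ Finset.range n, x i * f (Finsupp.single i 1) := by
    rw [f.apply_eq_sum_mul_apply_single (s := Finset.range n)
      (fun i hi => by simp_all [support_filter])]
    exact Finset.sum_congr rfl fun i hi => by rw [filter_apply_pos _ _ (by simp_all)]
  have split := congrArg f (filter_add_filter_not x (n ≤ ·))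
  rw [map_add] at split
  rw [← head]
  linarith

theorem Antitone.tendsto_zero_of_forall_exists_le {u : ℕ → ℝ} (hu : Antitone u)
    (h0 : ∀ n, 0 ≤ u n) (h : ∀ δ > 0, ∃ n, u n ≤ δ) : Tendsto u atTop (𝓝 0) := by
  refine tendsto_order.2 ⟨fun a ha => Eventually.of_forall fun n => ha.trans_le (h0 n),
    fun a ha => ?_⟩
  obtain ⟨N, hN⟩ := h (a / 2) (half_pos ha)
  exact eventually_atTop.2 ⟨N, fun n hn => (hu hn).trans_lt (hN.trans_lt (half_lt_self ha))⟩

variable {M : Set (ℕ → Bool)}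

namespace Theta

theorem zero : Theta M 0 := by
  simpa using conv (M := M) (a := 0) (b := 0) (by simp) (basis 0) (basis 0)

theorem smul {x : ℕ →₀ ℝ} {a : ℝ} (ha : |a| ≤ 1) (hx : Theta M x) : Theta M (a • x) := by
  simpa using conv (b := 0) (by simpa using ha) hx zero

theorem filter (p : ℕ → Prop) [DecidablePred p] {x : ℕ →₀ ℝ} (hx : Theta M x) :
    Theta M (x.filter p) := by
  induction hx with
  | basis i =>
    by_cases h : p i
    · rw [filter_single_of_pos _ h]; exact basis i
    · rw [filter_single_of_neg _ h]; exact zero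
  | conv hab _ _ ihx ihy =>
    rw [filter_add, filter_smul, filter_smul]
    exact conv hab ihx ihy
  | adm E x hE _ ih =>
    have hcomm : ((2⁻¹ : ℝ) • ∑ k, (x k).filter (· ∈ E k)).filter p
        = (2⁻¹ : ℝ) • ∑ k, ((x k).filter p).filter (· ∈ E k) := by
      ext a
      by_cases hp : p a <;> simp [filter_apply, hp, finsetSum_apply]
    rw [hcomm]
    exact adm E _ hE ih

end Theta

theorem convex_setOf_theta : Convex ℝ {x | Theta M x} :=
  fun _ hx _ hy a b ha hb hab =>
    Theta.conv (by rw [abs_of_nonneg ha, abs_of_nonneg hb, hab]) hx hy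

theorem balanced_setOf_theta : Balanced ℝ {x | Theta M x} := by
  rintro a ha _ ⟨y, hy, rfl⟩
  exact Theta.smul ha hy

theorem exists_nonneg_mem_smul_setOf_theta (x : ℕ →₀ ℝ) :
    ∃ r : ℝ, 0 ≤ r ∧ x ∈ r • {y | Theta M y} := by
  induction x using Finsupp.induction with
  | zero => exact ⟨0, le_rfl, 0, Theta.zero, smul_zero 0⟩
  | single_add i b x _ _ ih =>
    obtain ⟨r, hr, hx⟩ := ih
    have hb : single i b ∈ |b| • {y | Theta M y} :=
      balanced_setOf_theta.smul_mono (by simp) ⟨_, Theta.basis i, smul_single_one i b⟩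
    exact ⟨|b| + r, by positivity,
      convex_setOf_theta.add_smul (abs_nonneg b) hr ▸ Set.add_mem_add hb hx⟩

theorem absorbent_setOf_theta : Absorbent ℝ {x | Theta M x} := fun x => by
  obtain ⟨r, hr, hx⟩ := exists_nonneg_mem_smul_setOf_theta (M := M) x
  exact Absorbs.of_norm ⟨r, fun a ha => Set.singleton_subset_iff.2 <|
    balanced_setOf_theta.smul_mono (by rwa [Real.norm_of_nonneg hr]) hx⟩

theorem mem_smul_setOf_theta_of_tnorm_lt {x : ℕ →₀ ℝ} {r : ℝ} (h : tnorm M x < r) :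
    x ∈ r • {y | Theta M y} := by
  obtain ⟨b, hb, hbr, hx⟩ := exists_lt_of_gauge_lt absorbent_setOf_theta h
  refine balanced_setOf_theta.smul_mono ?_ hx
  rw [Real.norm_of_nonneg hb.le, Real.norm_of_nonneg (hb.trans hbr).le]
  exact hbr.le

theorem tnorm_nonneg (x : ℕ →₀ ℝ) : 0 ≤ tnorm M x := gauge_nonneg x

theorem tnorm_neg (x : ℕ →₀ ℝ) : tnorm M (-x) = tnorm M x :=
  gauge_neg (fun _ hy => by simpa using Theta.smul (a := -1) (by simp) hy) x

theorem tnorm_smul_of_nonneg {a : ℝ} (ha : 0 ≤ a) (x : ℕ →₀ ℝ) :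
    tnorm M (a • x) = a * tnorm M x :=
  gauge_smul_of_nonneg ha x

theorem tnorm_filter_le (p : ℕ → Prop) [DecidablePred p] (x : ℕ →₀ ℝ) :
    tnorm M (x.filter p) ≤ tnorm M x :=
  gauge_apply_le_of_mapsTo absorbent_setOf_theta
    { filterAddHom p with map_smul' := fun _ _ => filter_smul } (fun _ hy => Theta.filter p hy) x

theorem tnorm_sum_filter_le {n : ℕ} {E : Fin n → Finset ℕ} (hE : MAdmissible M E)
    {x : Fin n → ℕ →₀ ℝ} {c : ℝ} (hc : 0 ≤ c) (hx : ∀ k, tnorm M (x k) ≤ c) :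
    tnorm M (∑ k, (x k).filter (· ∈ E k)) ≤ 2 * c := by
  refine le_of_forall_gt_imp_ge_of_dense fun r hr => ?_
  choose w hw hwx using fun k => mem_smul_setOf_theta_of_tnorm_lt ((hx k).trans_lt
    (by linarith : c < r / 2))
  have hsum : ∑ k, (x k).filter (· ∈ E k) = r • ((2⁻¹ : ℝ) • ∑ k, (w k).filter (· ∈ E k)) := by
    simp only [← hwx, filter_smul, ← Finset.smul_sum, smul_smul]
    ring_nf
  rw [hsum]
  exact gauge_le_of_mem (by linarith) ⟨_, Theta.adm E w hE hw, rfl⟩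

theorem tnorm_add_add_le {m₁ m₂ m₃ : ℕ}
    (hA : (fun i => decide (i = m₁ ∨ i = m₂ ∨ i = m₃)) ∈ M) {v₁ v₂ v₃ : ℕ →₀ ℝ}
    (hv₁ : v₁ ∈ supported ℝ ℝ (Set.Ico m₁ m₂)) (hv₂ : v₂ ∈ supported ℝ ℝ (Set.Ico m₂ m₃))
    (hv₃ : v₃ ∈ supported ℝ ℝ (Set.Ici m₃)) {c : ℝ} (h₁ : tnorm M v₁ ≤ c)
    (h₂ : tnorm M v₂ ≤ c) (h₃ : tnorm M v₃ ≤ c) :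
    tnorm M (v₁ + v₂ + v₃) ≤ 2 * c := by
  rw [mem_supported] at hv₁ hv₂ hv₃
  have hE : MAdmissible M ![v₁.support, v₂.support, v₃.support] := by
    refine ⟨_, hA, ![m₁, m₂, m₃], fun k => by fin_cases k <;> simp, fun k i hi => ?_,
      fun k hk i hi => ?_⟩
    · fin_cases k
      exacts [(hv₁ hi).1, (hv₂ hi).1, hv₃ hi]
    · fin_cases k
      exacts [(hv₁ hi).2, (hv₂ hi).2, absurd hk (by decide)]
  have := tnorm_sum_filter_le hE (x := ![v₁, v₂, v₃]) ((tnorm_nonneg v₁).trans h₁)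
    (fun k => by fin_cases k <;> assumption)
  convert this using 2
  ext i
  simp only [Fin.sum_univ_three, Finsupp.add_apply, filter_apply]
  split_ifs <;> simp_all

theorem exists_lt_mem_supported_Ico {n : ℕ} {v : ℕ →₀ ℝ} (hv : v ∈ supported ℝ ℝ (Set.Ici n)) :
    ∃ m, n < m ∧ v ∈ supported ℝ ℝ (Set.Ico n m) := by
  obtain ⟨N, hN⟩ := v.support.exists_nat_subset_range
  refine ⟨max N (n + 1), by omega, (mem_supported _ _).2 fun i hi => ⟨?_, ?_⟩⟩
  · exact (mem_supported _ _).1 hv hi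
  · have := Finset.mem_range.1 (hN hi)
    omega

def LargeOnTails (M : Set (ℕ → Bool)) (f : (ℕ →₀ ℝ) →ₗ[ℝ] ℝ) (δ c : ℝ) : Prop :=
  ∀ n : ℕ, ∃ v ∈ supported ℝ ℝ (Set.Ici n), tnorm M v ≤ c ∧ δ ≤ f v

namespace LargeOnTails

variable {f : (ℕ →₀ ℝ) →ₗ[ℝ] ℝ} {δ c : ℝ}

theorem two_thirds_mul (h3 : ∀ m₁ m₂ m₃ : ℕ, m₁ < m₂ → m₂ < m₃ →
      (fun i => decide (i = m₁ ∨ i = m₂ ∨ i = m₃)) ∈ M)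
    (h : LargeOnTails M f δ c) : LargeOnTails M f δ (2 / 3 * c) := by
  intro n
  obtain ⟨v₁, hs₁, hn₁, hf₁⟩ := h n
  obtain ⟨m₂, h₁₂, hs₁⟩ := exists_lt_mem_supported_Ico hs₁
  obtain ⟨v₂, hs₂, hn₂, hf₂⟩ := h m₂
  obtain ⟨m₃, h₂₃, hs₂⟩ := exists_lt_mem_supported_Ico hs₂
  obtain ⟨v₃, hs₃, hn₃, hf₃⟩ := h m₃
  have hsum := tnorm_add_add_le (h3 n m₂ m₃ h₁₂ h₂₃) hs₁ hs₂ hs₃ hn₁ hn₂ hn₃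
  refine ⟨(3⁻¹ : ℝ) • (v₁ + v₂ + v₃), ?_, ?_, ?_⟩
  · have mono := fun s (hs : s ⊆ Set.Ici n) => supported_mono (M := ℝ) (R := ℝ) hs
    refine Submodule.smul_mem _ _ (add_mem (add_mem (mono _ ?_ hs₁) (mono _ ?_ hs₂))
      (mono _ ?_ hs₃)) <;> intro i hi <;> simp only [Set.mem_Ico, Set.mem_Ici] at hi ⊢ <;> omega
  · rw [tnorm_smul_of_nonneg (by norm_num)]
    linarith
  · simp only [map_smul, map_add, smul_eq_mul]
    linarith

theorem pow_two_thirds (h3 : ∀ m₁ m₂ m₃ : ℕ, m₁ < m₂ → m₂ < m₃ →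
      (fun i => decide (i = m₁ ∨ i = m₂ ∨ i = m₃)) ∈ M)
    (h : LargeOnTails M f δ 1) (k : ℕ) : LargeOnTails M f δ ((2 / 3) ^ k) := by
  induction k with
  | zero => simpa using h
  | succ k ih => simpa [pow_succ, mul_comm] using ih.two_thirds_mul h3

theorem nonpos (h3 : ∀ m₁ m₂ m₃ : ℕ, m₁ < m₂ → m₂ < m₃ →
      (fun i => decide (i = m₁ ∨ i = m₂ ∨ i = m₃)) ∈ M)
    {C : ℝ} (hC : 0 ≤ C) (hf : ∀ x, |f x| ≤ C * tnorm M x) (h : LargeOnTails M f δ 1) :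
    δ ≤ 0 := by
  have hδ : ∀ k : ℕ, δ ≤ C * (2 / 3) ^ k := fun k => by
    obtain ⟨v, -, hv, hδv⟩ := h.pow_two_thirds h3 k 0
    calc δ ≤ |f v| := hδv.trans (le_abs_self _)
      _ ≤ C * tnorm M v := hf v
      _ ≤ C * (2 / 3) ^ k := by gcongr
  simpa using ge_of_tendsto'
    ((tendsto_pow_atTop_nhds_zero_of_lt_one (by norm_num) (by norm_num)).const_mul C) hδ

end LargeOnTails

noncomputable def tailDualNorm (M : Set (ℕ → Bool)) (f : (ℕ →₀ ℝ) →ₗ[ℝ] ℝ) (n : ℕ) : ℝ :=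
  sSup {r | ∃ x : ℕ →₀ ℝ, tnorm M x ≤ 1 ∧ r = |f (x.filter (n ≤ ·))|}

section tailDualNorm

variable {f : (ℕ →₀ ℝ) →ₗ[ℝ] ℝ}

theorem tailDualNorm_nonneg (n : ℕ) : 0 ≤ tailDualNorm M f n :=
  Real.sSup_nonneg fun _ ⟨_, _, hr⟩ => hr ▸ abs_nonneg _

theorem antitone_tailDualNorm {C : ℝ} (hC : 0 ≤ C) (hf : ∀ x, |f x| ≤ C * tnorm M x) :
    Antitone (tailDualNorm M f) := by
  intro m n hmn
  refine Real.sSup_le ?_ (tailDualNorm_nonneg m)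
  rintro _ ⟨x, hx, rfl⟩
  have hbdd : BddAbove {r | ∃ x : ℕ →₀ ℝ, tnorm M x ≤ 1 ∧ r = |f (x.filter (m ≤ ·))|} := by
    refine ⟨C, ?_⟩
    rintro _ ⟨y, hy, rfl⟩
    calc |f _| ≤ C * tnorm M (y.filter (m ≤ ·)) := hf _
      _ ≤ C * 1 := by gcongr; exact (tnorm_filter_le _ y).trans hy
      _ = C := mul_one C
  refine le_csSup hbdd ⟨x.filter (n ≤ ·), (tnorm_filter_le _ x).trans hx, ?_⟩
  congr 2
  ext i
  simp only [filter_apply]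
  split_ifs <;> first | rfl | omega

theorem largeOnTails_of_forall_lt_tailDualNorm {δ : ℝ} (h : ∀ n, δ < tailDualNorm M f n) :
    LargeOnTails M f δ 1 := by
  intro n
  obtain ⟨_, ⟨x, hx, rfl⟩, hδ⟩ :=
    exists_lt_of_lt_csSup (by exact ⟨0, 0, by rw [tnorm, gauge_zero]; exact zero_le_one, by rw [filter_zero, map_zero, abs_zero]⟩) (h n)
  have hv : x.filter (n ≤ ·) ∈ supported ℝ ℝ (Set.Ici n) :=
    (mem_supported _ _).2 fun i hi => by simp_all [support_filter]
  have hvx := (tnorm_filter_le (M := M) (n ≤ ·) x).trans hx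
  rcases le_total 0 (f (x.filter (n ≤ ·))) with hpos | hneg
  · exact ⟨_, hv, hvx, by rw [abs_of_nonneg hpos] at hδ; exact hδ.le⟩
  · refine ⟨_, neg_mem hv, by rwa [tnorm_neg], ?_⟩
    rw [abs_of_nonpos hneg] at hδ
    rw [map_neg]
    exact hδ.le

end tailDualNorm

theorem stmt5_general (M : Set (ℕ → Bool))
    (h3 : ∀ m₁ m₂ m₃ : ℕ, m₁ < m₂ → m₂ < m₃ →
      (fun i => decide (i = m₁ ∨ i = m₂ ∨ i = m₃)) ∈ M) :
    ∀ f : (ℕ →₀ ℝ) →ₗ[ℝ] ℝ, (∃ C : ℝ, ∀ x : ℕ →₀ ℝ, |f x| ≤ C * tnorm M x) →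
      Filter.Tendsto
        (fun n : ℕ => sSup {r : ℝ | ∃ x : ℕ →₀ ℝ, tnorm M x ≤ 1 ∧
          r = |f x - ∑ i ∈ Finset.range n, x i * f (Finsupp.single i 1)|})
        Filter.atTop (nhds 0) := by
  rintro f ⟨C, hC⟩
  have hf : ∀ x, |f x| ≤ max C 0 * tnorm M x := fun x =>
    (hC x).trans (mul_le_mul_of_nonneg_right (le_max_left C 0) (tnorm_nonneg x))
  simp_rw [sub_sum_range_eq_apply_filter]
  refine (antitone_tailDualNorm (le_max_right C 0) hf).tendsto_zero_of_forall_exists_le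
    tailDualNorm_nonneg fun δ hδ => ?_
  by_contra! h
  exact hδ.not_ge ((largeOnTails_of_forall_lt_tailDualNorm h).nonpos h3 (le_max_right C 0) hf)

/-- If `M` contains all three-element sets, then the canonical basis is a shrinking basis of
the completion `T*[M,1/2]`: every `‖·‖_M`-bounded linear functional `x*` on `c₀₀` satisfies
`x* = ∑ᵢ x*(eᵢ) eᵢ*` in the dual norm, i.e. the dual norms of the tails
`x* - ∑_{i<n} x*(eᵢ) eᵢ*` tend to `0`. -/
theorem stmt5 (M : Set (ℕ → Bool)) (hM : IsCompact M)
    (h3 : ∀ m₁ m₂ m₃ : ℕ, m₁ < m₂ → m₂ < m₃ →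
      (fun i => decide (i = m₁ ∨ i = m₂ ∨ i = m₃)) ∈ M) :
    ∀ f : (ℕ →₀ ℝ) →ₗ[ℝ] ℝ, (∃ C : ℝ, ∀ x : ℕ →₀ ℝ, |f x| ≤ C * tnorm M x) →
      Filter.Tendsto
        (fun n : ℕ => sSup {r : ℝ | ∃ x : ℕ →₀ ℝ, tnorm M x ≤ 1 ∧
          r = |f x - ∑ i ∈ Finset.range n, x i * f (Finsupp.single i 1)|})
        Filter.atTop (nhds 0) :=
  stmt5_general M h3
end

section
/- The set C = {M ∈ K(2^ℕ) : M contains an infinite subset of ℕ} is a complete analytic subset of the hyperspace K(2^ℕ). -/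
open TopologicalSpace MeasureTheory

/-- A fixed metric on the Cantor space `2^ℕ = ℕ → Bool`, compatible with the product
topology. -/
noncomputable def cantorMetric : MetricSpace (ℕ → Bool) :=
  TopologicalSpace.metrizableSpaceMetric _

attribute [local instance] cantorMetric

open TopologicalSpace MeasureTheory

/-! ### Coding finite and infinite sequences as subsets of ℕ -/

/-- partial sums code: positions of elements -/
def Efn (x : ℕ → ℕ) (i : ℕ) : ℕ := (Finset.range (i + 1)).sum x + i

lemma Efn_zero (x : ℕ → ℕ) : Efn x 0 = x 0 := by simp [Efn]

lemma Efn_succ (x : ℕ → ℕ) (i : ℕ) : Efn x (i + 1) = Efn x i + x (i + 1) + 1 := by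
  simp [Efn, Finset.sum_range_succ]; ring

lemma Efn_strictMono (x : ℕ → ℕ) : StrictMono (Efn x) :=
  strictMono_nat_of_lt_succ (fun n => by rw [Efn_succ]; omega)

lemma self_le_Efn (x : ℕ → ℕ) (i : ℕ) : i ≤ Efn x i := Nat.le_add_left i _

lemma Efn_congr {x y : ℕ → ℕ} {i : ℕ} (h : ∀ j ≤ i, x j = y j) : Efn x i = Efn y i := by
  unfold Efn
  congr 1
  exact Finset.sum_congr rfl (fun j hj => h j (by simpa [Nat.lt_succ_iff] using hj))

/-- initial segment of an infinite sequence, as a list -/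
def seg (x : ℕ → ℕ) (m : ℕ) : List ℕ := (List.range m).map x

@[simp] lemma seg_length (x : ℕ → ℕ) (m : ℕ) : (seg x m).length = m := by simp [seg]

/-- extension of a list to an infinite sequence -/
def extL (s : List ℕ) : ℕ → ℕ := fun i => s.getD i 0

lemma extL_seg {x : ℕ → ℕ} {i m : ℕ} (h : i < m) : extL (seg x m) i = x i := by
  simp [extL, seg, List.getD_eq_getElem?_getD, List.getElem?_map, List.getElem?_range, h]

lemma seg_prefix_seg {x : ℕ → ℕ} {k m : ℕ} (h : k ≤ m) : seg x k <+: seg x m := by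
  rw [List.prefix_iff_eq_take]
  simp [seg, ← List.map_take, List.take_range, Nat.min_eq_left h]

lemma seg_getElem {x : ℕ → ℕ} {m i : ℕ} (h : i < m) :
    (seg x m)[i]'(by simpa using h) = x i := by simp [seg]

lemma extL_of_prefix {t s : List ℕ} (h : t <+: s) {i : ℕ} (hi : i < t.length) :
    extL t i = extL s i := by
  obtain ⟨r, rfl⟩ := h
  simp [extL, List.getD_eq_getElem?_getD, List.getElem?_append_left hi]

lemma seg_eq_seg_iff {x y : ℕ → ℕ} {m : ℕ} :
    seg x m = seg y m ↔ ∀ n < m, x n = y n := by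
  constructor
  · intro h n hn
    have := congrArg (fun l => l.getD n 0) h
    simpa [seg, List.getD_eq_getElem?_getD, List.getElem?_map, List.getElem?_range, hn] using this
  · intro h
    apply List.ext_getElem (by simp)
    intro i h1 h2
    simp only [seg_length] at h1
    rw [seg_getElem h1, seg_getElem h1]
    exact h i h1

/-- the characteristic function of the finite set coded by a list -/
def code (s : List ℕ) : ℕ → Bool := fun n =>
  (List.range s.length).any fun i => Efn (extL s) i == n

/-- the characteristic function of the infinite set coded by an element of Baire space -/
def codeInf (x : ℕ → ℕ) : ℕ → Bool := fun n =>
  (List.range (n + 1)).any fun i => Efn x i == n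

lemma code_eq_true {s : List ℕ} {n : ℕ} :
    code s n = true ↔ ∃ i, i < s.length ∧ Efn (extL s) i = n := by
  simp [code, List.any_eq_true, List.mem_range]

lemma codeInf_eq_true {x : ℕ → ℕ} {n : ℕ} :
    codeInf x n = true ↔ ∃ i, Efn x i = n := by
  simp only [codeInf, List.any_eq_true, List.mem_range, beq_iff_eq]
  constructor
  · rintro ⟨i, _, hi⟩; exact ⟨i, hi⟩
  · rintro ⟨i, hi⟩
    exact ⟨i, by have := self_le_Efn x i; omega, hi⟩

lemma code_seg_agree {x : ℕ → ℕ} {m n : ℕ} (h : n < m) :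
    code (seg x m) n = codeInf x n := by
  rw [Bool.eq_iff_iff, code_eq_true, codeInf_eq_true]
  constructor
  · rintro ⟨i, hi, hEi⟩
    refine ⟨i, ?_⟩
    rw [← hEi]
    exact Efn_congr (fun j hj => (extL_seg (show j < m by simp at hi; omega)).symm)
  · rintro ⟨i, hEi⟩
    have hin : i ≤ n := le_trans (self_le_Efn x i) (le_of_eq hEi)
    refine ⟨i, by simp; omega, ?_⟩
    rw [← hEi]
    exact Efn_congr (fun j hj => extL_seg (show j < m by omega))

lemma codeInf_infinite (x : ℕ → ℕ) : {n | codeInf x n = true}.Infinite :=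
  Set.infinite_of_injective_forall_mem (f := Efn x) (Efn_strictMono x).injective
    (fun i => codeInf_eq_true.mpr ⟨i, rfl⟩)
/-! ### Recovering a sequence from an infinite coded set -/

/-- the increasing enumeration of the set coded by `A : ℕ → Bool` -/
noncomputable def nthA (A : ℕ → Bool) : ℕ → ℕ := Nat.nth (fun n => A n = true)

/-- the sequence whose code is `A` -/
noncomputable def diffA (A : ℕ → Bool) : ℕ → ℕ := fun i =>
  match i with
  | 0 => nthA A 0
  | (j + 1) => nthA A (j + 1) - nthA A j - 1

section recovery

variable {A : ℕ → Bool} (hA : {n | A n = true}.Infinite)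
include hA

lemma nthA_strictMono : StrictMono (nthA A) := Nat.nth_strictMono hA

lemma nthA_mem (i : ℕ) : A (nthA A i) = true := Nat.nth_mem_of_infinite hA i

omit hA in
lemma nthA_surj {n : ℕ} (hn : A n = true) : ∃ k, nthA A k = n := by
  haveI : DecidablePred (fun n => A n = true) := fun n => Bool.decEq _ _
  exact ⟨Nat.count (fun n => A n = true) n, Nat.nth_count hn⟩

lemma Efn_diffA (i : ℕ) : Efn (diffA A) i = nthA A i := by
  induction i with
  | zero => rw [Efn_zero]; rfl
  | succ j ih =>
    have h : nthA A j < nthA A (j + 1) := (nthA_strictMono hA) (by omega)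
    rw [Efn_succ, ih]
    show nthA A j + (nthA A (j + 1) - nthA A j - 1) + 1 = nthA A (j + 1)
    omega

/-- Main recovery lemma: if a finite code agrees with an infinite `A` up to the `m`-th element
of `A`, then the sequence coded by the list extends the first `m+1` entries of `diffA A`. -/
lemma recover (m : ℕ) {s : List ℕ}
    (hmatch : ∀ n, n ≤ nthA A m → code s n = A n) : seg (diffA A) (m + 1) <+: s := by
  -- the key claim
  have C1 : ∀ i, i ≤ m → i < s.length ∧ Efn (extL s) i = nthA A i := by
    intro i
    induction i using Nat.strong_induction_on with
    | _ i IH =>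
      intro him
      -- the element nthA A i appears in the code of s
      have hi_mem : code s (nthA A i) = true := by
        rw [hmatch _ ((nthA_strictMono hA).monotone him)]
        exact nthA_mem hA i
      obtain ⟨j, hj, hEj⟩ := code_eq_true.mp hi_mem
      rcases lt_trichotomy j i with hji | rfl | hij
      · exfalso
        have ⟨_, hEj'⟩ := IH j hji (le_trans (le_of_lt hji) him)
        rw [hEj'] at hEj
        exact absurd hEj (ne_of_lt ((nthA_strictMono hA) hji))
      · exact ⟨hj, hEj⟩
      · exfalso
        have hi_len : i < s.length := lt_trans hij hj
        set n := Efn (extL s) i with hn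
        have hni : n < nthA A i := by
          rw [← hEj]; exact (Efn_strictMono _) hij
        have hcode : code s n = true := code_eq_true.mpr ⟨i, hi_len, rfl⟩
        have hnm : n ≤ nthA A m := le_trans (le_of_lt hni) ((nthA_strictMono hA).monotone him)
        have hAn : A n = true := by rw [← hmatch n hnm]; exact hcode
        obtain ⟨k, hk⟩ := nthA_surj hAn
        have hki : k < i := by
          by_contra hcon
          have : nthA A i ≤ nthA A k := (nthA_strictMono hA).monotone (not_lt.mp hcon)
          omega
        have ⟨_, hEk⟩ := IH k hki (le_trans (le_of_lt hki) him)
        rw [hk] at hEk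
        have : k = i := (Efn_strictMono (extL s)).injective (hEk.trans hn)
        omega
  -- now conclude the prefix property
  have hmlen : m < s.length := (C1 m le_rfl).1
  rw [List.prefix_iff_eq_take]
  apply List.ext_getElem (by simp; omega)
  intro i h1 h2
  simp only [seg_length] at h1
  rw [seg_getElem h1, List.getElem_take]
  have hgetD : s[i] = extL s i := by
    simp [extL, List.getD_eq_getElem?_getD, List.getElem?_eq_getElem (by omega : i < s.length)]
  rw [hgetD]
  match i, h1 with
  | 0, _ =>
    have := (C1 0 (Nat.zero_le m)).2
    rw [Efn_zero] at this
    exact this.symm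
  | (j + 1), h1 =>
    have hj1 := (C1 (j + 1) (by omega)).2
    have hj0 := (C1 j (by omega)).2
    rw [Efn_succ, hj0] at hj1
    have hlt : nthA A j < nthA A (j + 1) := (nthA_strictMono hA) (by omega)
    show nthA A (j + 1) - nthA A j - 1 = extL s (j + 1)
    omega

end recovery
/-! ### Trees attached to a closed subset of `W × (ℕ → ℕ)` -/

/-- basic cylinder in Baire space -/
def cylB (t : List ℕ) : Set (ℕ → ℕ) := {x | seg x t.length = t}

lemma mem_cylB_seg (x : ℕ → ℕ) (m : ℕ) : x ∈ cylB (seg x m) := by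
  show seg x (seg x m).length = seg x m
  rw [seg_length]

lemma cylB_of_prefix {t : List ℕ} {x : ℕ → ℕ} {m : ℕ} (h : t <+: seg x m) : x ∈ cylB t := by
  have hlen : t.length ≤ m := by simpa using h.length_le
  have : t = seg x t.length := by
    rw [List.prefix_iff_eq_take] at h
    rw [h]
    simp [seg, ← List.map_take, List.take_range, Nat.min_eq_left hlen]
  show seg x t.length = t
  rw [← this]

/-- every open neighborhood in a countable product contains a cylinder neighborhood -/
lemma exists_cyl_subset {π : ℕ → Type*} [∀ n, TopologicalSpace (π n)]
    {O : Set (∀ n, π n)} (hO : IsOpen O) {x : ∀ n, π n} (hx : x ∈ O) :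
    ∃ m, ∀ y, (∀ n < m, y n = x n) → y ∈ O := by
  obtain ⟨I, u, hu, hsub⟩ := isOpen_pi_iff.mp hO x hx
  refine ⟨I.sup id + 1, fun y hy => hsub ?_⟩
  intro i hi
  rw [hy i (by have := Finset.le_sup (f := id) hi; simp at this; omega)]
  exact (hu i hi).2

set_option linter.unusedSectionVars false

section TTsec

variable {W : Type*} [TopologicalSpace W]

/-- the tree of non-rejected finite sequences at `w`, relative to a closed set `F` and a
basis `cB` of `W` -/
def TT (cB : Set (Set W)) (F : Set (W × (ℕ → ℕ))) (w : W) : Set (List ℕ) :=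
  {s | ∀ V ∈ cB, ∀ t, t <+: s → V ×ˢ cylB t ⊆ Fᶜ → w ∉ V}

lemma TT_of_prefix {cB : Set (Set W)} {F : Set (W × (ℕ → ℕ))} {w : W} {t s : List ℕ}
    (h : t <+: s) (hs : s ∈ TT cB F w) : t ∈ TT cB F w :=
  fun V hV t' ht' hsub => hs V hV t' (ht'.trans h) hsub

lemma TT_of_mem_F {cB : Set (Set W)} {F : Set (W × (ℕ → ℕ))} {w : W} {x : ℕ → ℕ}
    (hwx : (w, x) ∈ F) (m : ℕ) : seg x m ∈ TT cB F w := by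
  intro V hV t ht hsub hwV
  exact hsub (Set.mk_mem_prod hwV (cylB_of_prefix ht)) hwx

lemma mem_F_of_TT {cB : Set (Set W)} {F : Set (W × (ℕ → ℕ))} {w : W} {x : ℕ → ℕ}
    (hbasis : IsTopologicalBasis cB) (hF : IsClosed F)
    (h : ∀ m, seg x m ∈ TT cB F w) : (w, x) ∈ F := by
  by_contra hc
  obtain ⟨u, v, hu, hv, hwu, hxv, huv⟩ := isOpen_prod_iff.mp hF.isOpen_compl w x hc
  obtain ⟨m, hm⟩ := exists_cyl_subset hv hxv
  obtain ⟨V, hVB, hwV, hVu⟩ := hbasis.exists_subset_of_mem_open hwu hu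
  refine h m V hVB (seg x m) (List.prefix_refl _) ?_ hwV
  rintro ⟨a, y⟩ ⟨ha, hy⟩
  refine huv ⟨hVu ha, hm y ?_⟩
  have hy' : seg y m = seg x m := by simpa [cylB, seg_length] using hy
  exact seg_eq_seg_iff.mp hy'

lemma measurableSet_TT [MeasurableSpace W] {cB : Set (Set W)} {F : Set (W × (ℕ → ℕ))}
    (hcB : cB.Countable) (hmeas : ∀ V ∈ cB, MeasurableSet V) (s : List ℕ) :
    MeasurableSet {w : W | s ∈ TT cB F w} := by
  have : {w : W | s ∈ TT cB F w} =
      ⋂ V ∈ cB, ⋂ t ∈ {t : List ℕ | t <+: s ∧ V ×ˢ cylB t ⊆ Fᶜ}, Vᶜ := by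
    ext w
    simp only [Set.mem_iInter, Set.mem_setOf_eq, Set.mem_compl_iff]
    constructor
    · intro h V hV t ⟨ht1, ht2⟩
      exact h V hV t ht1 ht2
    · intro h V hV t ht1 ht2
      exact h V hV t ⟨ht1, ht2⟩
  rw [this]
  exact MeasurableSet.biInter hcB fun V hV =>
    MeasurableSet.biInter (Set.to_countable _) fun t _ => (hmeas V hV).compl

end TTsec
/-! ### The compact set associated to a tree, and its properties -/

/-- the empty subset of ℕ, as an element of Cantor space -/
def botC : ℕ → Bool := fun _ => false

/-- the nonempty compact subset of Cantor space associated to the tree of `w` -/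
noncomputable def KK {W : Type*} [TopologicalSpace W] (cB : Set (Set W))
    (F : Set (W × (ℕ → ℕ))) (w : W) : NonemptyCompacts (ℕ → Bool) :=
  ⟨⟨closure (insert botC (code '' TT cB F w)), isClosed_closure.isCompact⟩,
    ⟨botC, subset_closure (Set.mem_insert _ _)⟩⟩

lemma KK_coe {W : Type*} [TopologicalSpace W] (cB : Set (Set W))
    (F : Set (W × (ℕ → ℕ))) (w : W) :
    (KK cB F w : Set (ℕ → Bool)) = closure (insert botC (code '' TT cB F w)) := rfl

lemma KK_spec {W : Type*} [TopologicalSpace W] {cB : Set (Set W)} {F : Set (W × (ℕ → ℕ))}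
    (hbasis : IsTopologicalBasis cB) (hF : IsClosed F) (w : W) :
    (∃ A ∈ (KK cB F w : Set (ℕ → Bool)), {n : ℕ | A n = true}.Infinite) ↔
      ∃ x, (w, x) ∈ F := by
  constructor
  · rintro ⟨A, hAK, hA⟩
    refine ⟨diffA A, mem_F_of_TT hbasis hF (fun m => ?_)⟩
    have key : ∀ k, seg (diffA A) (k + 1) ∈ TT cB F w := by
      intro k
      have hopen : IsOpen {a : ℕ → Bool | ∀ n < nthA A k + 1, a n = A n} := by
        have : {a : ℕ → Bool | ∀ n < nthA A k + 1, a n = A n}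
            = ⋂ n : Fin (nthA A k + 1), (fun a : ℕ → Bool => a (n : ℕ)) ⁻¹' {A (n : ℕ)} := by
          ext a
          simp [Fin.forall_iff]
        rw [this]
        exact isOpen_iInter_of_finite fun n =>
          (continuous_apply (n : ℕ)).isOpen_preimage _ (isOpen_discrete _)
      rw [KK_coe] at hAK
      obtain ⟨a, haO, haE⟩ := _root_.mem_closure_iff.mp hAK _ hopen (fun n _ => rfl)
      rcases haE with rfl | ⟨s, hsT, rfl⟩
      · exfalso
        have h1 : botC (nthA A k) = A (nthA A k) := haO _ (by omega)
        rw [nthA_mem hA k] at h1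
        simp [botC] at h1
      · have hmatch : ∀ n, n ≤ nthA A k → code s n = A n := fun n hn => haO n (by omega)
        exact TT_of_prefix (recover hA k hmatch) hsT
    cases m with
    | zero => exact TT_of_prefix (seg_prefix_seg (by omega)) (key 0)
    | succ k => exact key k
  · rintro ⟨x, hwx⟩
    refine ⟨codeInf x, ?_, codeInf_infinite x⟩
    rw [KK_coe, _root_.mem_closure_iff]
    intro O hO hmem
    obtain ⟨m, hm⟩ := exists_cyl_subset hO hmem
    exact ⟨code (seg x m), hm _ (fun n hn => code_seg_agree hn),
      Set.mem_insert_of_mem _ ⟨seg x m, TT_of_mem_F hwx m, rfl⟩⟩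

/-! ### Measurability of `KK` -/

lemma biSup_eq_of_dense {X : Type*} [TopologicalSpace X] {h : X → ENNReal} (hh : Continuous h)
    {L D : Set X} (hDL : D ⊆ L) (hLD : L ⊆ closure D) :
    ⨆ b ∈ L, h b = ⨆ b ∈ D, h b := by
  apply le_antisymm
  · refine iSup₂_le fun b hb => ?_
    have hcl : closure D ⊆ {z | h z ≤ ⨆ b ∈ D, h b} := by
      apply (isClosed_le hh continuous_const).closure_subset_iff.mpr
      intro z hz
      simp only [Set.mem_setOf_eq]
      exact le_biSup h hz
    exact hcl (hLD hb)
  · exact iSup₂_le fun b hb => le_biSup _ (hDL hb)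

/-- a map into a second countable metric space is Borel measurable provided all
edistances to fixed points are measurable -/
lemma measurable_of_edist_measurable {α : Type*} [MetricSpace α] [SecondCountableTopology α]
    {W : Type*} [MeasurableSpace W] {f : W → α}
    (h : ∀ y : α, Measurable fun w => edist (f w) y) :
    @Measurable W α _ (borel α) f := by
  have hb : borel α = MeasurableSpace.generateFrom {s : Set α | IsOpen s} := rfl
  rw [hb]
  apply measurable_generateFrom
  intro U hU
  obtain ⟨D, Dcnt, Ddense⟩ := TopologicalSpace.exists_countable_dense α
  have key : f ⁻¹' U = ⋃ y ∈ D, ⋃ q : ℚ, ⋃ (_ : Metric.ball y (q : ℝ) ⊆ U),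
      {w | edist (f w) y < ENNReal.ofReal (q : ℝ)} := by
    ext w
    simp only [Set.mem_preimage, Set.mem_iUnion, Set.mem_setOf_eq]
    constructor
    · intro hw
      obtain ⟨ε, hε, hball⟩ := Metric.isOpen_iff.mp hU _ hw
      obtain ⟨y, hyD, hy⟩ := Ddense.exists_dist_lt (f w) (by positivity : (0:ℝ) < ε / 2)
      obtain ⟨q, hq1, hq2⟩ := exists_rat_btwn hy
      refine ⟨y, hyD, q, ?_, edist_lt_ofReal.mpr hq1⟩
      intro z hz
      apply hball
      rw [Metric.mem_ball] at hz ⊢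
      calc dist z (f w) ≤ dist z y + dist y (f w) := dist_triangle _ _ _
        _ < (q : ℝ) + ε / 2 := by
            rw [dist_comm y (f w)]
            exact add_lt_add_of_lt_of_le hz (le_of_lt hy)
        _ ≤ ε / 2 + ε / 2 := by
            have := le_of_lt hq2; linarith
        _ = ε := by ring
    · rintro ⟨y, hyD, q, hq, hw⟩
      rw [edist_lt_ofReal] at hw
      exact hq (Metric.mem_ball.mpr hw)
  rw [key]
  refine MeasurableSet.biUnion Dcnt fun y _ => MeasurableSet.iUnion fun q =>
    MeasurableSet.iUnion fun _ => measurableSet_lt (h y) measurable_const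

lemma measurable_KK {W : Type*} [TopologicalSpace W] [MeasurableSpace W]
    {cB : Set (Set W)} (F : Set (W × (ℕ → ℕ)))
    (hcB : cB.Countable) (hmeas : ∀ V ∈ cB, MeasurableSet V) :
    @Measurable W (NonemptyCompacts (ℕ → Bool)) _ (borel _) (KK cB F) := by
  classical
  letI : MetricSpace (NonemptyCompacts (ℕ → Bool)) :=
    @Metric.NonemptyCompacts.instMetricSpace (ℕ → Bool) cantorMetric
  refine @measurable_of_edist_measurable (NonemptyCompacts (ℕ → Bool)) _
    (show SecondCountableTopology (NonemptyCompacts (ℕ → Bool)) from inferInstance) W _ (KK cB F) ?_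
  intro L
  have hrw : ∀ w : W, edist (KK cB F w) L =
      max (max (Metric.infEDist botC (L : Set (ℕ → Bool)))
          (⨆ s : List ℕ, ⨆ (_ : s ∈ TT cB F w), Metric.infEDist (code s) (L : Set (ℕ → Bool))))
        (⨆ b ∈ (L : Set (ℕ → Bool)),
          Metric.infEDist b (insert botC (code '' TT cB F w))) := by
    intro w
    show Metric.hausdorffEDist (KK cB F w : Set (ℕ → Bool)) (L : Set (ℕ → Bool)) = _
    rw [KK_coe]
    erw [Metric.hausdorffEDist_closure_left]
    rw [Metric.hausdorffEDist_def]
    congr 1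
    rw [iSup_insert, iSup_image]
  have hfun : (fun w => edist (KK cB F w) L) = fun w =>
      max (max (Metric.infEDist botC (L : Set (ℕ → Bool)))
          (⨆ s : List ℕ, ⨆ (_ : s ∈ TT cB F w), Metric.infEDist (code s) (L : Set (ℕ → Bool))))
        (⨆ b ∈ (L : Set (ℕ → Bool)),
          Metric.infEDist b (insert botC (code '' TT cB F w))) := funext hrw
  rw [hfun]
  have meas1 : Measurable fun w =>
      ⨆ s : List ℕ, ⨆ (_ : s ∈ TT cB F w), Metric.infEDist (code s) (L : Set (ℕ → Bool)) := by
    apply Measurable.iSup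
    intro s
    have hs : (fun w => ⨆ (_ : s ∈ TT cB F w), Metric.infEDist (code s) (L : Set (ℕ → Bool)))
        = ({w : W | s ∈ TT cB F w}).piecewise
            (fun _ => Metric.infEDist (code s) (L : Set (ℕ → Bool))) (fun _ => ⊥) := by
      funext w
      by_cases hw : s ∈ TT cB F w
      · rw [iSup_pos hw, Set.piecewise_eq_of_mem _ _ _ (show w ∈ {w : W | s ∈ TT cB F w} from hw)]
      · rw [iSup_neg hw, Set.piecewise_eq_of_notMem _ _ _ (show w ∉ {w : W | s ∈ TT cB F w} from hw)]
    rw [hs]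
    exact Measurable.piecewise (measurableSet_TT hcB hmeas s) measurable_const measurable_const
  have meas2 : Measurable fun w =>
      ⨆ b ∈ (L : Set (ℕ → Bool)), Metric.infEDist b (insert botC (code '' TT cB F w)) := by
    obtain ⟨D0, hD0cnt, hD0dense⟩ :=
      TopologicalSpace.exists_countable_dense (↥(L : Set (ℕ → Bool)))
    set D : Set (ℕ → Bool) := Subtype.val '' D0 with hD
    have hDL : D ⊆ (L : Set (ℕ → Bool)) := by
      rintro _ ⟨⟨b, hb⟩, _, rfl⟩; exact hb
    have hLD : (L : Set (ℕ → Bool)) ⊆ closure D := by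
      intro b hb
      have h1 : (⟨b, hb⟩ : ↥(L : Set (ℕ → Bool))) ∈ closure D0 := by
        rw [hD0dense.closure_eq]; trivial
      exact image_closure_subset_closure_image continuous_subtype_val ⟨_, h1, rfl⟩
    haveI : Countable ↥D := (hD0cnt.image Subtype.val).to_subtype
    have h2 : (fun w => ⨆ b ∈ (L : Set (ℕ → Bool)),
          Metric.infEDist b (insert botC (code '' TT cB F w)))
        = fun w => ⨆ b : ↥D, Metric.infEDist (b : ℕ → Bool)
            (insert botC (code '' TT cB F w)) := by
      funext w
      rw [biSup_eq_of_dense Metric.continuous_infEDist hDL hLD, ← iSup_subtype'']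
    rw [h2]
    apply Measurable.iSup
    intro b
    have hb : (fun w => Metric.infEDist (b : ℕ → Bool) (insert botC (code '' TT cB F w)))
        = fun w => min (edist (b : ℕ → Bool) botC)
            (⨅ s : List ℕ, ⨅ (_ : s ∈ TT cB F w), edist (b : ℕ → Bool) (code s)) := by
      funext w
      rw [Metric.infEDist, iInf_insert, iInf_image]
    rw [hb]
    apply Measurable.min measurable_const
    apply Measurable.iInf
    intro s
    have hs : (fun w => ⨅ (_ : s ∈ TT cB F w), edist (b : ℕ → Bool) (code s))
        = ({w : W | s ∈ TT cB F w}).piecewise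
            (fun _ => edist (b : ℕ → Bool) (code s)) (fun _ => ⊤) := by
      funext w
      by_cases hw : s ∈ TT cB F w
      · rw [iInf_pos hw, Set.piecewise_eq_of_mem _ _ _ (show w ∈ {w : W | s ∈ TT cB F w} from hw)]
      · rw [iInf_neg hw, Set.piecewise_eq_of_notMem _ _ _ (show w ∉ {w : W | s ∈ TT cB F w} from hw)]
    rw [hs]
    exact Measurable.piecewise (measurableSet_TT hcB hmeas s) measurable_const measurable_const
  exact (Measurable.max measurable_const meas1).max meas2
/-! ### Part 1: the set is analytic -/

lemma measurableSet_infinite :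
    MeasurableSet {A : ℕ → Bool | {n : ℕ | A n = true}.Infinite} := by
  have heq : {A : ℕ → Bool | {n : ℕ | A n = true}.Infinite}
      = ⋂ N : ℕ, ⋃ n : ℕ, {A : ℕ → Bool | N < n ∧ A n = true} := by
    ext A
    simp only [Set.mem_setOf_eq, Set.mem_iInter, Set.mem_iUnion]
    constructor
    · intro h N
      obtain ⟨n, hn, hlt⟩ := h.exists_gt N
      exact ⟨n, hlt, hn⟩
    · intro h
      apply Set.infinite_of_forall_exists_gt
      intro N
      obtain ⟨n, h1, h2⟩ := h N
      exact ⟨n, h2, h1⟩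
  rw [heq]
  apply MeasurableSet.iInter; intro N
  apply MeasurableSet.iUnion; intro n
  by_cases hNn : N < n
  · have : {A : ℕ → Bool | N < n ∧ A n = true} = (fun A : ℕ → Bool => A n) ⁻¹' {true} := by
      ext A; simp [hNn]
    rw [this]
    exact (measurable_pi_apply n) (measurableSet_singleton true)
  · have : {A : ℕ → Bool | N < n ∧ A n = true} = ∅ := by
      ext A; simp [hNn]
    rw [this]
    exact MeasurableSet.empty

set_option maxHeartbeats 1000000 in
lemma analytic_part :
    AnalyticSet {K : NonemptyCompacts (ℕ → Bool) |
      ∃ A ∈ (K : Set (ℕ → Bool)), {n : ℕ | A n = true}.Infinite} := by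
  letI : MeasurableSpace (NonemptyCompacts (ℕ → Bool)) := borel _
  haveI : BorelSpace (NonemptyCompacts (ℕ → Bool)) := ⟨rfl⟩
  have hclosed : IsClosed {p : NonemptyCompacts (ℕ → Bool) × (ℕ → Bool) |
      p.2 ∈ (p.1 : Set (ℕ → Bool))} := by
    have heq : {p : NonemptyCompacts (ℕ → Bool) × (ℕ → Bool) | p.2 ∈ (p.1 : Set (ℕ → Bool))}
        = (fun p : NonemptyCompacts (ℕ → Bool) × (ℕ → Bool) =>
            Metric.infDist p.2 (p.1 : Set (ℕ → Bool))) ⁻¹' {0} := by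
      ext p
      simp only [Set.mem_setOf_eq, Set.mem_preimage, Set.mem_singleton_iff]
      rw [← p.1.isCompact.isClosed.mem_iff_infDist_zero p.1.nonempty]
    rw [heq]
    apply IsClosed.preimage ?_ isClosed_singleton
    exact Metric.lipschitz_infDist.continuous.comp continuous_swap
  have hS : MeasurableSet {p : NonemptyCompacts (ℕ → Bool) × (ℕ → Bool) |
      p.2 ∈ (p.1 : Set (ℕ → Bool)) ∧ {n : ℕ | p.2 n = true}.Infinite} := by
    have heq : {p : NonemptyCompacts (ℕ → Bool) × (ℕ → Bool) |
        p.2 ∈ (p.1 : Set (ℕ → Bool)) ∧ {n : ℕ | p.2 n = true}.Infinite}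
        = {p : NonemptyCompacts (ℕ → Bool) × (ℕ → Bool) | p.2 ∈ (p.1 : Set (ℕ → Bool))}
          ∩ (Prod.snd ⁻¹' {A : ℕ → Bool | {n : ℕ | A n = true}.Infinite}) := rfl
    rw [heq]
    exact hclosed.measurableSet.inter (measurable_snd measurableSet_infinite)
  have himg : {K : NonemptyCompacts (ℕ → Bool) |
      ∃ A ∈ (K : Set (ℕ → Bool)), {n : ℕ | A n = true}.Infinite}
      = Prod.fst '' {p : NonemptyCompacts (ℕ → Bool) × (ℕ → Bool) |
          p.2 ∈ (p.1 : Set (ℕ → Bool)) ∧ {n : ℕ | p.2 n = true}.Infinite} := by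
    ext K
    constructor
    · rintro ⟨A, hAK, hA⟩
      exact ⟨(K, A), ⟨hAK, hA⟩, rfl⟩
    · rintro ⟨⟨K', A⟩, ⟨h1, h2⟩, rfl⟩
      exact ⟨A, h1, h2⟩
  rw [himg]
  haveI : PolishSpace (ℕ → Bool) := {}
  haveI : (uniformity Bool).IsCountablyGenerated := by
    show (@uniformity Bool ⊥).IsCountablyGenerated
    rw [bot_uniformity]
    infer_instance
  haveI : (uniformity (NonemptyCompacts (ℕ → Bool))).IsCountablyGenerated := by
    obtain ⟨s, hs⟩ := (@uniformity (ℕ → Bool) (Pi.uniformSpace _)).exists_antitone_basis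
    exact hs.toHasBasis.uniformity_nonemptyCompacts.isCountablyGenerated
  haveI : IsCompletelyMetrizableSpace (NonemptyCompacts (ℕ → Bool)) :=
    IsCompletelyMetrizableSpace.of_completeSpace_metrizable
  haveI : PolishSpace (NonemptyCompacts (ℕ → Bool)) := {}
  exact hS.analyticSet.image_of_continuous continuous_fst

/-- The set `C = {M ∈ K(2^ℕ) : M contains an infinite subset of ℕ}` is a complete analytic
subset of the hyperspace `K(2^ℕ)` (here: nonempty compact subsets of Cantor space with the
Hausdorff/Vietoris topology): it is analytic, and every analytic subset of a Polish space is
the preimage of it under a Borel map. -/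
theorem stmt9 :
    AnalyticSet {K : NonemptyCompacts (ℕ → Bool) |
      ∃ A ∈ (K : Set (ℕ → Bool)), {n : ℕ | A n = true}.Infinite} ∧
    ∀ (W : Type) [TopologicalSpace W] [PolishSpace W] [MeasurableSpace W] [BorelSpace W]
      (B : Set W), AnalyticSet B →
      ∃ f : W → NonemptyCompacts (ℕ → Bool),
        @Measurable W (NonemptyCompacts (ℕ → Bool)) _ (borel _) f ∧
        f ⁻¹' {K : NonemptyCompacts (ℕ → Bool) |
          ∃ A ∈ (K : Set (ℕ → Bool)), {n : ℕ | A n = true}.Infinite} = B := by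
  refine ⟨analytic_part, ?_⟩
  intro W _ _ _ _ B hB
  rw [AnalyticSet_def] at hB
  rcases hB with rfl | ⟨g, hg, hrange⟩
  · refine ⟨fun _ => ⟨⟨{botC}, isCompact_singleton⟩, ⟨botC, rfl⟩⟩, measurable_const, ?_⟩
    ext w
    simp only [Set.mem_preimage, Set.mem_setOf_eq, Set.mem_empty_iff_false, iff_false]
    rintro ⟨A, hA, hinf⟩
    have hAbot : A = botC := hA
    subst hAbot
    apply Set.not_infinite.mpr ?_ hinf
    have : {n : ℕ | botC n = true} = ∅ := by ext n; simp [botC]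
    rw [this]
    exact Set.finite_empty
  · set F : Set (W × (ℕ → ℕ)) := {p | g p.2 = p.1} with hFdef
    have hFclosed : IsClosed F := isClosed_eq (hg.comp continuous_snd) continuous_fst
    obtain ⟨cB, hcB_cnt, -, hcB_basis⟩ := exists_countable_basis W
    refine ⟨KK cB F, measurable_KK F hcB_cnt
      (fun V hV => (hcB_basis.isOpen hV).measurableSet), ?_⟩
    ext w
    simp only [Set.mem_preimage, Set.mem_setOf_eq]
    rw [KK_spec hcB_basis hFclosed w]
    constructor
    · rintro ⟨x, hx⟩
      rw [← hrange]
      exact ⟨x, hx⟩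
    · intro hwB
      rw [← hrange] at hwB
      obtain ⟨x, hx⟩ := hwB
      exact ⟨x, hx⟩
end

section
/- Let G be the Gurariy space. For every finite-dimensional Banach spaces X₀ ⊆ X₁, every n ∈ ℕ, and every 2⁻ⁿ-isometry f : X₀ → G, there exists a 2⁻⁽ⁿ⁺¹⁾-isometry g : X₁ → G such that ‖g|_{X₀} − f‖ < 2·2⁻ⁿ. Consequently, for any separable Banach space X with dense increasing union of finite-dimensional subspaces X₁ ⊆ X₂ ⊆ ⋯, there exists a linear isometric embedding of X into G. -/
/-- `f` is an `ε`-isometry: `(1+ε)⁻¹ ‖x‖ < ‖f x‖ < (1+ε) ‖x‖` for all `x ≠ 0`. -/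
def IsEpsIsometry {X G : Type*} [NormedAddCommGroup X] [NormedSpace ℝ X]
    [NormedAddCommGroup G] [NormedSpace ℝ G] (ε : ℝ) (f : X →L[ℝ] G) : Prop :=
  ∀ x : X, x ≠ 0 → (1 + ε)⁻¹ * ‖x‖ < ‖f x‖ ∧ ‖f x‖ < (1 + ε) * ‖x‖

/-- `G` is a Gurariy space: for every `ε > 0`, all finite-dimensional `X ⊆ Y` and every
linear isometry `f : X → G` there is an `ε`-isometry `g : Y → G` extending `f`. -/
def IsGurariy (G : Type) [NormedAddCommGroup G] [NormedSpace ℝ G] : Prop :=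
  ∀ (ε : ℝ), 0 < ε →
    ∀ (Y : Type) [NormedAddCommGroup Y] [NormedSpace ℝ Y] [FiniteDimensional ℝ Y]
      (X : Submodule ℝ Y) (f : X →ₗᵢ[ℝ] G),
      ∃ g : Y →L[ℝ] G, IsEpsIsometry ε g ∧ ∀ x : X, g x = f x

/-!
Given an `ε`-isometry `f : X₀ → G` and an isometric embedding `X₀ → Y`, renorm `Y × range f` by the
largest seminorm under which both inclusions are contractions and `‖(x, -f x)‖ ≤ ε ‖x‖`. The
two-sided bounds on `f` make `Y` and `range f` sit isometrically in this finite-dimensional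
amalgam `W`, so the Gurariy property extends the inclusion `range f → G` to a `δ`-isometry
`g : W → G`, and `g|_Y` is `(1 + δ) ε`-close to `f` on `X₀`.

Iterating with `ε = 2⁻ⁿ, δ = 2⁻⁽ⁿ⁺¹⁾` along the chain `X₁ ⊆ X₂ ⊆ ⋯` gives maps `Tₙ : Xₙ → G` with
`‖Tₙ₊₁|_{Xₙ} - Tₙ‖ < 2·2⁻ⁿ`, so their values at any fixed vector form a Cauchy sequence; the
pointwise limit is a linear isometry on `⋃ Xₙ`, which extends by continuity to `X`.
-/

open Filter Topology

namespace IsEpsIsometry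

variable {X Y G : Type*} [NormedAddCommGroup X] [NormedSpace ℝ X] [NormedAddCommGroup Y]
  [NormedSpace ℝ Y] [NormedAddCommGroup G] [NormedSpace ℝ G] {ε : ℝ} {f : Y →L[ℝ] G}

theorem norm_apply_le (hf : IsEpsIsometry ε f) (y : Y) : ‖f y‖ ≤ (1 + ε) * ‖y‖ := by
  rcases eq_or_ne y 0 with rfl | hy
  · simp
  · exact (hf y hy).2.le

theorem le_norm_apply (hf : IsEpsIsometry ε f) (y : Y) : (1 + ε)⁻¹ * ‖y‖ ≤ ‖f y‖ := by
  rcases eq_or_ne y 0 with rfl | hy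
  · simp
  · exact (hf y hy).1.le

theorem comp_linearIsometry (hf : IsEpsIsometry ε f) (e : X →ₗᵢ[ℝ] Y) :
    IsEpsIsometry ε (f.comp e.toContinuousLinearMap) := fun x hx => by
  simpa using hf (e x) ((map_ne_zero_iff e e.injective).2 hx)

end IsEpsIsometry

section Amalgamation

variable {X₀ Y E : Type*} [NormedAddCommGroup X₀] [NormedSpace ℝ X₀] [NormedAddCommGroup Y]
  [NormedSpace ℝ Y] [NormedAddCommGroup E] [NormedSpace ℝ E]
  (ι : X₀ →ₗᵢ[ℝ] Y) (f : X₀ →ₗ[ℝ] E) {ε : ℝ}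

/-- The largest seminorm on `Y × E` for which `inl` and `inr` are contractions and
`‖(ι x, -f x)‖ ≤ ε ‖x‖`. -/
noncomputable def amalgamationNorm (ε : ℝ) (p : Y × E) : ℝ :=
  ⨅ x : X₀, ‖p.1 - ι x‖ + ‖p.2 + f x‖ + ε * ‖x‖

theorem amalgamationNorm_le (hε : 0 ≤ ε) (p : Y × E) (x : X₀) :
    amalgamationNorm ι f ε p ≤ ‖p.1 - ι x‖ + ‖p.2 + f x‖ + ε * ‖x‖ :=
  ciInf_le ⟨0, by rintro _ ⟨x, rfl⟩; positivity⟩ x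

theorem le_amalgamationNorm {p : Y × E} {c : ℝ}
    (h : ∀ x : X₀, c ≤ ‖p.1 - ι x‖ + ‖p.2 + f x‖ + ε * ‖x‖) : c ≤ amalgamationNorm ι f ε p :=
  le_ciInf h

theorem amalgamationNorm_zero (hε : 0 ≤ ε) : amalgamationNorm ι f ε 0 = 0 :=
  le_antisymm (by simpa using amalgamationNorm_le ι f hε 0 0)
    (le_amalgamationNorm ι f fun x => by positivity)

theorem amalgamationNorm_add_le (hε : 0 ≤ ε) (p q : Y × E) :
    amalgamationNorm ι f ε (p + q) ≤ amalgamationNorm ι f ε p + amalgamationNorm ι f ε q := by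
  refine le_ciInf_add_ciInf fun x x' => (amalgamationNorm_le ι f hε _ (x + x')).trans ?_
  have h₁ : ‖(p + q).1 - ι (x + x')‖ ≤ ‖p.1 - ι x‖ + ‖q.1 - ι x'‖ := by
    rw [map_add, Prod.fst_add, add_sub_add_comm]; exact norm_add_le _ _
  have h₂ : ‖(p + q).2 + f (x + x')‖ ≤ ‖p.2 + f x‖ + ‖q.2 + f x'‖ := by
    rw [map_add, Prod.snd_add, add_add_add_comm]; exact norm_add_le _ _
  have h₃ : ε * ‖x + x'‖ ≤ ε * ‖x‖ + ε * ‖x'‖ := by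
    rw [← mul_add]; exact mul_le_mul_of_nonneg_left (norm_add_le _ _) hε
  linarith

theorem amalgamationNorm_smul_le (hε : 0 ≤ ε) (c : ℝ) (p : Y × E) :
    amalgamationNorm ι f ε (c • p) ≤ ‖c‖ * amalgamationNorm ι f ε p := by
  unfold amalgamationNorm
  rw [Real.mul_iInf_of_nonneg (norm_nonneg c)]
  refine le_ciInf fun x => (amalgamationNorm_le ι f hε _ (c • x)).trans_eq ?_
  simp only [Prod.smul_fst, Prod.smul_snd, map_smul, ← smul_sub, ← smul_add, norm_smul]
  ring

noncomputable def amalgamationSeminorm (hε : 0 ≤ ε) : Seminorm ℝ (Y × E) :=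
  .ofSMulLE (amalgamationNorm ι f ε) (amalgamationNorm_zero ι f hε)
    (amalgamationNorm_add_le ι f hε) (amalgamationNorm_smul_le ι f hε)

theorem amalgamationNorm_inl (hε : 0 ≤ ε) (hf : ∀ x, (1 + ε)⁻¹ * ‖x‖ ≤ ‖f x‖) (y : Y) :
    amalgamationNorm ι f ε (y, 0) = ‖y‖ := by
  refine le_antisymm (by simpa using amalgamationNorm_le ι f hε (y, 0) 0)
    (le_amalgamationNorm ι f fun x => ?_)
  have h₁ : ‖y‖ ≤ ‖y - ι x‖ + ‖x‖ := by simpa using norm_le_norm_sub_add y (ι x)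
  have h₂ : ‖x‖ ≤ (1 + ε)⁻¹ * ‖x‖ + ε * ‖x‖ := by
    have : 0 < 1 + ε := by linarith
    rw [← sub_nonneg, show (1 + ε)⁻¹ * ‖x‖ + ε * ‖x‖ - ‖x‖ = (1 + ε)⁻¹ * (ε ^ 2 * ‖x‖) by
      field_simp; ring]
    positivity
  have h₃ := hf x
  simp only [zero_add]
  linarith

theorem amalgamationNorm_inr (hε : 0 ≤ ε) (hf : ∀ x, ‖f x‖ ≤ (1 + ε) * ‖x‖) (v : E) :
    amalgamationNorm ι f ε (0, v) = ‖v‖ := by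
  refine le_antisymm (by simpa using amalgamationNorm_le ι f hε (0, v) 0)
    (le_amalgamationNorm ι f fun x => ?_)
  have h₁ : ‖v‖ ≤ ‖v + f x‖ + ‖f x‖ := norm_le_add_norm_add v (f x)
  have h₂ := hf x
  simp only [zero_sub, norm_neg, ι.norm_map]
  linarith

theorem amalgamationNorm_graph_le (hε : 0 ≤ ε) (x : X₀) :
    amalgamationNorm ι f ε (ι x, -f x) ≤ ε * ‖x‖ := by
  simpa using amalgamationNorm_le ι f hε (ι x, -f x) x

theorem eq_zero_of_amalgamationNorm_eq_zero (hε : 0 < ε) (hf : ∀ x, ‖f x‖ ≤ (1 + ε) * ‖x‖)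
    {p : Y × E} (hp : amalgamationNorm ι f ε p = 0) : p = 0 := by
  set c := ε / (1 + ε)
  have hc : 0 < c := by positivity
  have hc₁ : c ≤ 1 := div_le_one_of_le₀ (by linarith) (by linarith)
  have hcε : c ≤ ε := div_le_self hε.le (by linarith)
  have hcε' : c * (1 + ε) = ε := div_mul_cancel₀ ε (by linarith)
  have h₁ : c * ‖p.1‖ ≤ amalgamationNorm ι f ε p := le_amalgamationNorm ι f fun x => by
    have := mul_le_mul_of_nonneg_left (norm_le_norm_sub_add p.1 (ι x)) hc.le
    rw [ι.norm_map] at this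
    nlinarith [norm_nonneg (p.1 - ι x), norm_nonneg (p.2 + f x), norm_nonneg x]
  have h₂ : c * ‖p.2‖ ≤ amalgamationNorm ι f ε p := le_amalgamationNorm ι f fun x => by
    have := mul_le_mul_of_nonneg_left
      ((norm_le_add_norm_add p.2 (f x)).trans (add_le_add_right (hf x) _)) hc.le
    nlinarith [norm_nonneg (p.1 - ι x), norm_nonneg (p.2 + f x), norm_nonneg x]
  rw [hp] at h₁ h₂
  exact Prod.ext (norm_le_zero_iff.mp (nonpos_of_mul_nonpos_right h₁ hc))
    (norm_le_zero_iff.mp (nonpos_of_mul_nonpos_right h₂ hc))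

end Amalgamation

universe u v

/-- A copy of `Y × E` without the product norm, to be renormed by `amalgamationSeminorm`. -/
def AmalgamationSpace (Y E : Type*) : Type _ := Y × E

instance (Y E : Type*) [AddCommGroup Y] [AddCommGroup E] : AddCommGroup (AmalgamationSpace Y E) :=
  inferInstanceAs (AddCommGroup (Y × E))

instance (Y E : Type*) [AddCommGroup Y] [AddCommGroup E] [Module ℝ Y] [Module ℝ E] :
    Module ℝ (AmalgamationSpace Y E) :=
  inferInstanceAs (Module ℝ (Y × E))

instance (Y E : Type*) [AddCommGroup Y] [AddCommGroup E] [Module ℝ Y] [Module ℝ E]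
    [FiniteDimensional ℝ Y] [FiniteDimensional ℝ E] :
    FiniteDimensional ℝ (AmalgamationSpace Y E) :=
  inferInstanceAs (FiniteDimensional ℝ (Y × E))

theorem exists_amalgamation {X₀ : Type*} {Y : Type u} {E : Type v} [NormedAddCommGroup X₀]
    [NormedSpace ℝ X₀] [NormedAddCommGroup Y] [NormedSpace ℝ Y] [FiniteDimensional ℝ Y]
    [NormedAddCommGroup E] [NormedSpace ℝ E] [FiniteDimensional ℝ E]
    (ι : X₀ →ₗᵢ[ℝ] Y) (f : X₀ →ₗ[ℝ] E) {ε : ℝ} (hε : 0 < ε)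
    (hf_ge : ∀ x, (1 + ε)⁻¹ * ‖x‖ ≤ ‖f x‖) (hf_le : ∀ x, ‖f x‖ ≤ (1 + ε) * ‖x‖) :
    ∃ (W : Type max u v) (_ : NormedAddCommGroup W) (_ : NormedSpace ℝ W)
      (_ : FiniteDimensional ℝ W) (i : Y →ₗᵢ[ℝ] W) (j : E →ₗᵢ[ℝ] W),
      ∀ x, ‖i (ι x) - j (f x)‖ ≤ ε * ‖x‖ := by
  let N := amalgamationSeminorm ι f hε.le
  let _ : NormedAddCommGroup (AmalgamationSpace Y E) := AddGroupNorm.toNormedAddCommGroup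
    { N.toAddGroupSeminorm with
      eq_zero_of_map_eq_zero' := fun _ => eq_zero_of_amalgamationNorm_eq_zero ι f hε hf_le }
  let _ : NormedSpace ℝ (AmalgamationSpace Y E) := ⟨fun c p => (map_smul_eq_mul N c p).le⟩
  refine ⟨AmalgamationSpace Y E, inferInstance, inferInstance, inferInstance,
    ⟨LinearMap.inl ℝ Y E, amalgamationNorm_inl ι f hε.le hf_ge⟩,
    ⟨LinearMap.inr ℝ Y E, amalgamationNorm_inr ι f hε.le hf_le⟩, fun x => ?_⟩
  have hx : ((ι x, 0) - (0, f x) : Y × E) = (ι x, -f x) := by simp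
  show amalgamationNorm ι f ε ((ι x, 0) - (0, f x)) ≤ ε * ‖x‖
  exact hx ▸ amalgamationNorm_graph_le ι f hε.le x

namespace IsGurariy

variable {G : Type} [NormedAddCommGroup G] [NormedSpace ℝ G]

theorem exists_isEpsIsometry_norm_comp_sub_le (hG : IsGurariy G) {X₀ : Type*} {Y : Type}
    [NormedAddCommGroup X₀] [NormedSpace ℝ X₀] [NormedAddCommGroup Y] [NormedSpace ℝ Y]
    [FiniteDimensional ℝ Y]
    (ι : X₀ →ₗᵢ[ℝ] Y) {ε δ : ℝ} (hε : 0 < ε) (hδ : 0 < δ) {f : X₀ →L[ℝ] G}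
    (hf : IsEpsIsometry ε f) :
    ∃ g : Y →L[ℝ] G, IsEpsIsometry δ g ∧ ‖g.comp ι.toContinuousLinearMap - f‖ ≤ (1 + δ) * ε := by
  have : FiniteDimensional ℝ X₀ := .of_injective ι.toLinearMap ι.injective
  let f' := (f : X₀ →ₗ[ℝ] G).rangeRestrict
  obtain ⟨W, _, _, _, i, j, hij⟩ :=
    exists_amalgamation ι f' hε hf.le_norm_apply hf.norm_apply_le
  obtain ⟨g, hg, hgj⟩ := hG δ hδ W (LinearMap.range j.toLinearMap)
    ((Submodule.subtypeₗᵢ _).comp j.equivRange.symm.toLinearIsometry)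
  have hgf : ∀ x, g (j (f' x)) = f x := fun x => by
    simpa [f'] using hgj (j.equivRange (f' x))
  refine ⟨g.comp i.toContinuousLinearMap, hg.comp_linearIsometry i,
    ContinuousLinearMap.opNorm_le_bound _ (by positivity) fun x => ?_⟩
  calc ‖g (i (ι x)) - f x‖ = ‖g (i (ι x) - j (f' x))‖ := by rw [map_sub, hgf]
    _ ≤ (1 + δ) * ‖i (ι x) - j (f' x)‖ := hg.norm_apply_le _
    _ ≤ (1 + δ) * (ε * ‖x‖) := by gcongr; exact hij x
    _ = (1 + δ) * ε * ‖x‖ := by ring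

theorem kubis_solecki (hG : IsGurariy G) {X₀ : Type*} {Y : Type} [NormedAddCommGroup X₀]
    [NormedSpace ℝ X₀] [NormedAddCommGroup Y] [NormedSpace ℝ Y] [FiniteDimensional ℝ Y]
    (ι : X₀ →ₗᵢ[ℝ] Y) (n : ℕ) {f : X₀ →L[ℝ] G} (hf : IsEpsIsometry ((2 : ℝ) ^ (-(n : ℤ))) f) :
    ∃ g : Y →L[ℝ] G, IsEpsIsometry ((2 : ℝ) ^ (-(n : ℤ) - 1)) g ∧
      ‖g.comp ι.toContinuousLinearMap - f‖ < 2 * (2 : ℝ) ^ (-(n : ℤ)) := by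
  obtain ⟨g, hg, hgf⟩ := hG.exists_isEpsIsometry_norm_comp_sub_le ι (by positivity)
    (by positivity : (0 : ℝ) < 2 ^ (-(n : ℤ) - 1)) hf
  have hδ : (2 : ℝ) ^ (-(n : ℤ) - 1) < 1 := zpow_lt_one_of_neg₀ (by norm_num) (by omega)
  refine ⟨g, hg, hgf.trans_lt ?_⟩
  gcongr
  linarith

theorem exists_isEpsIsometry (hG : IsGurariy G) {ε : ℝ} (hε : 0 < ε) (Y : Type)
    [NormedAddCommGroup Y] [NormedSpace ℝ Y] [FiniteDimensional ℝ Y] :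
    ∃ g : Y →L[ℝ] G, IsEpsIsometry ε g := by
  obtain ⟨g, hg, -⟩ := hG ε hε Y ⊥ ⟨0, fun x => by simp [Subsingleton.elim x 0]⟩
  exact ⟨g, hg⟩

theorem exists_chain (hG : IsGurariy G) {X : Type} [NormedAddCommGroup X]
    [NormedSpace ℝ X] {V : ℕ → Submodule ℝ X} (hV : Monotone V)
    [∀ n, FiniteDimensional ℝ (V n)] :
    ∃ T : ∀ n, V n →L[ℝ] G, (∀ n : ℕ, IsEpsIsometry ((2 : ℝ) ^ (-(n : ℤ))) (T n)) ∧
      ∀ n (x : V n), ‖T (n + 1) (Submodule.inclusion (hV n.le_succ) x) - T n x‖ ≤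
        2 * (2 : ℝ) ^ (-(n : ℤ)) * ‖x‖ := by
  obtain ⟨T₀, hT₀⟩ := hG.exists_isEpsIsometry one_pos (V 0)
  choose next hnext_iso hnext_near using fun (n : ℕ) (f : {f : V n →L[ℝ] G //
      IsEpsIsometry ((2 : ℝ) ^ (-(n : ℤ))) f}) =>
    hG.kubis_solecki ⟨Submodule.inclusion (hV n.le_succ), fun _ => rfl⟩ n f.2
  let T : ∀ n : ℕ, {f : V n →L[ℝ] G // IsEpsIsometry ((2 : ℝ) ^ (-(n : ℤ))) f} :=
    fun n => Nat.rec ⟨T₀, by simpa using hT₀⟩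
      (fun n f => ⟨next n f, by simpa [sub_eq_add_neg, add_comm] using hnext_iso n f⟩) n
  refine ⟨fun n => (T n).1, fun n => (T n).2, fun n x => ?_⟩
  exact ((ContinuousLinearMap.le_opNorm _ x).trans
    (mul_le_mul_of_nonneg_right (hnext_near n (T n)).le (norm_nonneg x)))

end IsGurariy

theorem LinearIsometry.exists_extension_of_dense {𝕜 X G : Type*} [NontriviallyNormedField 𝕜]
    [NormedAddCommGroup X] [NormedSpace 𝕜 X] [NormedAddCommGroup G] [NormedSpace 𝕜 G]
    [CompleteSpace G] {M : Submodule 𝕜 X} (hM : Dense (M : Set X)) (J : M →ₗᵢ[𝕜] G) :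
    ∃ J' : X →ₗᵢ[𝕜] G, ∀ x : M, J' x = J x := by
  have hdense : DenseRange M.subtypeL := by simpa [DenseRange] using hM
  have hext : ∀ x : M, J.toContinuousLinearMap.extend M.subtypeL x = J x :=
    J.toContinuousLinearMap.extend_eq hdense isometry_subtype_coe.isUniformInducing
  have hnorm : (fun x => ‖J.toContinuousLinearMap.extend M.subtypeL x‖) = (‖·‖) :=
    Continuous.ext_on hM (by fun_prop) continuous_norm fun x hx => by
      simpa using congrArg norm (hext ⟨x, hx⟩)
  exact ⟨⟨_, congrFun hnorm⟩, hext⟩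

section Chain

variable {X G : Type*} [NormedAddCommGroup X] [NormedSpace ℝ X] [NormedAddCommGroup G]
  [NormedSpace ℝ G] {V : ℕ → Submodule ℝ X} (T : ∀ n, V n →L[ℝ] G)

open Classical in
noncomputable def chainEval (x : X) (n : ℕ) : G :=
  if h : x ∈ V n then T n ⟨x, h⟩ else 0

theorem chainEval_of_mem {x : X} {n : ℕ} (h : x ∈ V n) : chainEval T x n = T n ⟨x, h⟩ :=
  dif_pos h

theorem chainEval_add_eventuallyEq (hV : Monotone V) {x y : X} {k : ℕ} (hx : x ∈ V k)
    (hy : y ∈ V k) : chainEval T (x + y) =ᶠ[atTop] chainEval T x + chainEval T y :=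
  eventually_atTop.2 ⟨k, fun n hn => by
    rw [Pi.add_apply, chainEval_of_mem T (hV hn hx), chainEval_of_mem T (hV hn hy),
      chainEval_of_mem T (add_mem (hV hn hx) (hV hn hy)), ← map_add]
    rfl⟩

theorem chainEval_smul_eventuallyEq (hV : Monotone V) (c : ℝ) {x : X} {k : ℕ} (hx : x ∈ V k) :
    chainEval T (c • x) =ᶠ[atTop] c • chainEval T x :=
  eventually_atTop.2 ⟨k, fun n hn => by
    rw [Pi.smul_apply, chainEval_of_mem T (hV hn hx),
      chainEval_of_mem T (Submodule.smul_mem _ c (hV hn hx)), ← map_smul]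
    rfl⟩

theorem cauchySeq_chainEval (hV : Monotone V) {d : ℕ → ℝ} (hd : Summable d)
    (hTd : ∀ n (x : V n), ‖T (n + 1) (Submodule.inclusion (hV n.le_succ) x) - T n x‖ ≤ d n * ‖x‖)
    {x : X} {k : ℕ} (hx : x ∈ V k) : CauchySeq (chainEval T x) := by
  refine (cauchySeq_shift k).1 (cauchySeq_of_dist_le_of_summable (fun n => d (n + k) * ‖x‖)
    (fun n => ?_) (((summable_nat_add_iff k).2 hd).mul_right _))
  have hn : x ∈ V (n + k) := hV (Nat.le_add_left k n) hx
  rw [dist_comm, dist_eq_norm, Nat.succ_eq_add_one, Nat.add_right_comm,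
    chainEval_of_mem T hn, chainEval_of_mem T (hV (n + k).le_succ hn)]
  exact hTd (n + k) ⟨x, hn⟩

theorem tendsto_norm_chainEval (hV : Monotone V) {ε : ℕ → ℝ} (hε : Tendsto ε atTop (𝓝 0))
    (hT : ∀ n, IsEpsIsometry (ε n) (T n)) {x : X} {k : ℕ} (hx : x ∈ V k) :
    Tendsto (fun n => ‖chainEval T x n‖) atTop (𝓝 ‖x‖) := by
  have h1ε : Tendsto (fun n => 1 + ε n) atTop (𝓝 1) := by simpa using hε.const_add 1
  refine tendsto_of_tendsto_of_tendsto_of_le_of_le'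
    (by simpa using (h1ε.inv₀ one_ne_zero).mul_const ‖x‖) (by simpa using h1ε.mul_const ‖x‖)
    ?_ ?_ <;> filter_upwards [eventually_ge_atTop k] with n hn <;>
    rw [chainEval_of_mem T (hV hn hx)]
  exacts [(hT n).le_norm_apply (⟨x, _⟩ : V n), (hT n).norm_apply_le (⟨x, _⟩ : V n)]

theorem nonempty_linearIsometry_of_chain [CompleteSpace G] (hV : Monotone V)
    (hdense : Dense (⋃ n, (V n : Set X))) {ε d : ℕ → ℝ} (hε : Tendsto ε atTop (𝓝 0))
    (hT : ∀ n, IsEpsIsometry (ε n) (T n)) (hd : Summable d)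
    (hTd : ∀ n (x : V n), ‖T (n + 1) (Submodule.inclusion (hV n.le_succ) x) - T n x‖ ≤ d n * ‖x‖) :
    Nonempty (X →ₗᵢ[ℝ] G) := by
  let M : Submodule ℝ X := ⨆ n, V n
  have hM : (M : Set X) = ⋃ n, (V n : Set X) :=
    Submodule.coe_iSup_of_chain ⟨V, hV⟩
  have hmem : ∀ x : M, ∃ k, (x : X) ∈ V k := fun x =>
    Set.mem_iUnion.1 (hM ▸ x.2)
  have hmem₂ : ∀ x y : M, ∃ k, (x : X) ∈ V k ∧ (y : X) ∈ V k := fun x y => by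
    obtain ⟨k, hk⟩ := hmem x
    obtain ⟨l, hl⟩ := hmem y
    exact ⟨max k l, hV (le_max_left k l) hk, hV (le_max_right k l) hl⟩
  have hlim : ∀ (x : X) (k : ℕ), x ∈ V k →
      Tendsto (chainEval T x) atTop (𝓝 (limUnder atTop (chainEval T x))) := fun x k hx =>
    (cauchySeq_chainEval T hV hd hTd hx).tendsto_limUnder
  let J : M →ₗᵢ[ℝ] G :=
    { toFun := fun x => limUnder atTop (chainEval T x)
      map_add' := fun x y => by
        obtain ⟨k, hx, hy⟩ := hmem₂ x y
        exact tendsto_nhds_unique (hlim _ k (add_mem hx hy))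
          (((hlim x k hx).add (hlim y k hy)).congr' (chainEval_add_eventuallyEq T hV hx hy).symm)
      map_smul' := fun c x => by
        obtain ⟨k, hx⟩ := hmem x
        exact tendsto_nhds_unique (hlim _ k (Submodule.smul_mem _ c hx))
          (((hlim x k hx).const_smul c).congr' (chainEval_smul_eventuallyEq T hV c hx).symm)
      norm_map' := fun x => by
        obtain ⟨k, hx⟩ := hmem x
        exact tendsto_nhds_unique (hlim x k hx).norm (tendsto_norm_chainEval T hV hε hT hx) }
  obtain ⟨J', -⟩ := J.exists_extension_of_dense (hM ▸ hdense)
  exact ⟨J'⟩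

end Chain

theorem stmt11_general (G : Type) [NormedAddCommGroup G] [NormedSpace ℝ G] [CompleteSpace G]
    (hG : IsGurariy G) :
    (∀ (Y : Type) [NormedAddCommGroup Y] [NormedSpace ℝ Y] [FiniteDimensional ℝ Y]
      (X₀ : Submodule ℝ Y) (n : ℕ) (f : X₀ →L[ℝ] G),
      IsEpsIsometry ((2 : ℝ) ^ (-(n : ℤ))) f →
      ∃ g : Y →L[ℝ] G, IsEpsIsometry ((2 : ℝ) ^ (-(n : ℤ) - 1)) g ∧
        ‖g.comp X₀.subtypeL - f‖ < 2 * (2 : ℝ) ^ (-(n : ℤ))) ∧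
    (∀ (X : Type) [NormedAddCommGroup X] [NormedSpace ℝ X] [CompleteSpace X]
      [TopologicalSpace.SeparableSpace X] (Xn : ℕ → Submodule ℝ X),
      Monotone Xn → (∀ n, FiniteDimensional ℝ (Xn n)) →
      Dense (⋃ n, (Xn n : Set X)) → Nonempty (X →ₗᵢ[ℝ] G)) := by
  refine ⟨fun Y _ _ _ X₀ n f hf => ?_, fun X _ _ _ _ Xn hmono hfd hdense => ?_⟩
  · simpa using hG.kubis_solecki X₀.subtypeₗᵢ n hf
  · have := hfd
    obtain ⟨T, hT, hTT⟩ := hG.exists_chain hmono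
    have hpow : ∀ n : ℕ, (2 : ℝ) ^ (-(n : ℤ)) = (1 / 2) ^ n := fun n => by simp
    simp only [hpow] at hT hTT
    exact nonempty_linearIsometry_of_chain T hmono hdense
      (tendsto_pow_atTop_nhds_zero_of_lt_one (by norm_num) (by norm_num)) hT
      (summable_geometric_two.mul_left 2) hTT

/-- Kubiś–Solecki: in the Gurariy space `G`, every `2⁻ⁿ`-isometry `f : X₀ → G` defined on a
subspace `X₀` of a finite-dimensional space `X₁` admits a `2⁻⁽ⁿ⁺¹⁾`-isometry `g : X₁ → G`
with `‖g|_{X₀} − f‖ < 2·2⁻ⁿ`; consequently every separable Banach space with a dense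
increasing union of finite-dimensional subspaces embeds linearly isometrically into `G`. -/
theorem stmt11 (G : Type) [NormedAddCommGroup G] [NormedSpace ℝ G] [CompleteSpace G]
    [TopologicalSpace.SeparableSpace G] (hG : IsGurariy G) :
    (∀ (Y : Type) [NormedAddCommGroup Y] [NormedSpace ℝ Y] [FiniteDimensional ℝ Y]
      (X₀ : Submodule ℝ Y) (n : ℕ) (f : X₀ →L[ℝ] G),
      IsEpsIsometry ((2 : ℝ) ^ (-(n : ℤ))) f →
      ∃ g : Y →L[ℝ] G, IsEpsIsometry ((2 : ℝ) ^ (-(n : ℤ) - 1)) g ∧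
        ‖g.comp X₀.subtypeL - f‖ < 2 * (2 : ℝ) ^ (-(n : ℤ))) ∧
    (∀ (X : Type) [NormedAddCommGroup X] [NormedSpace ℝ X] [CompleteSpace X]
      [TopologicalSpace.SeparableSpace X] (Xn : ℕ → Submodule ℝ X),
      Monotone Xn → (∀ n, FiniteDimensional ℝ (Xn n)) →
      Dense (⋃ n, (Xn n : Set X)) → Nonempty (X →ₗᵢ[ℝ] G)) :=
  stmt11_general G hG
end

section
/- For every tree T on ℕ, the collection M_T = { ν̃ : ν ∈ T ∪ [T] or |ν| ≤ 3 } is a compact subset of 2^ℕ (identifying subsets of ℕ with their indicator sequences), and M_T contains an infinite set if and only if T is ill-founded. -/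
/-- A tree on `ℕ⁺` (positive naturals): a set of finite sequences closed under initial
segments. -/
def IsTree (T : Set (List ℕ+)) : Prop :=
  ∀ l ∈ T, ∀ l' : List ℕ+, l' <+: l → l' ∈ T

/-- The infinite branches `[T]` of a tree `T`. -/
def branches (T : Set (List ℕ+)) : Set (ℕ → ℕ+) :=
  {σ | ∀ k : ℕ, (List.ofFn fun i : Fin k => σ i) ∈ T}

/-- `ν̃` for a finite sequence `ν = (n₁, …, nₖ)`: the set `{n₁, n₁+n₂, …, n₁+⋯+nₖ}` of its
partial sums. -/
def partialSums (ν : List ℕ+) : Set ℕ :=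
  {s | ∃ k < ν.length, s = ((ν.take (k + 1)).map (fun p : ℕ+ => (p : ℕ))).sum}

/-- `ν̃` for an infinite sequence `ν = (n₁, n₂, …)`: the set `{n₁, n₁+n₂, …}`. -/
def partialSumsInf (ν : ℕ → ℕ+) : Set ℕ :=
  {s | ∃ k : ℕ, s = ∑ i ∈ Finset.range (k + 1), (ν i : ℕ)}

/-- Indicator function of a set of naturals, as an element of the Cantor space. -/
noncomputable def setToBool (A : Set ℕ) : ℕ → Bool := fun n => decide (n ∈ A) (h := Classical.dec _)

/-- `M_T = { ν̃ : ν ∈ T ∪ [T] or |ν| ≤ 3 }`, as a collection of subsets of `ℕ` coded as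
elements of Cantor space. -/
noncomputable def MT (T : Set (List ℕ+)) : Set (ℕ → Bool) :=
  (fun ν : List ℕ+ => setToBool (partialSums ν)) '' {ν | ν ∈ T ∨ ν.length ≤ 3} ∪
  (fun ν : ℕ → ℕ+ => setToBool (partialSumsInf ν)) '' branches T

/-!
Restricted to an initial segment `[0, N]`, a member of `M_T` is again of the form `ν̃` with `ν`
finite and in `T` or of length at most `3`: truncate a finite `ν`, or cut an infinite branch
after `N + 1` terms. Conversely a set all of whose restrictions are of that form lies in `M_T`:
this is clear for finite sets, and for an infinite set, since `ν ↦ ν̃` is injective, its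
restrictions are the `ν̃` for the prefixes of a single sequence, whose prefixes of length `≥ 4`
must therefore lie in `T`. So `M_T` is an intersection of sets each depending on finitely many
coordinates, hence closed in the compact Cantor space. Finally `ν̃` is finite for finite `ν` and
infinite for infinite `ν`.
-/

lemma partialSums_nil : partialSums [] = ∅ := by
  simp [partialSums]

lemma partialSums_cons (a : ℕ+) (l : List ℕ+) :
    partialSums (a :: l) = insert (a : ℕ) (((a : ℕ) + ·) '' partialSums l) := by
  ext s
  simp only [partialSums, List.take_succ_cons, List.map_cons, List.sum_cons, List.length_cons,
    Set.mem_insert_iff, Set.mem_image, Set.mem_ofPred_eq]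
  constructor
  · rintro ⟨_ | k, hk, rfl⟩
    · simp
    · exact Or.inr ⟨_, ⟨k, by omega, rfl⟩, rfl⟩
  · rintro (rfl | ⟨_, ⟨k, hk, rfl⟩, rfl⟩)
    · exact ⟨0, by omega, by simp⟩
    · exact ⟨k + 1, by omega, rfl⟩

lemma le_of_mem_partialSums_cons {a : ℕ+} {l : List ℕ+} {s : ℕ} (hs : s ∈ partialSums (a :: l)) :
    (a : ℕ) ≤ s := by
  rw [partialSums_cons] at hs
  rcases hs with rfl | ⟨t, -, rfl⟩ <;> simp

lemma pos_of_mem_partialSums {ν : List ℕ+} {s : ℕ} (hs : s ∈ partialSums ν) : 0 < s := by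
  cases ν with
  | nil => simp [partialSums_nil] at hs
  | cons a l => exact a.pos.trans_le (le_of_mem_partialSums_cons hs)

lemma finite_partialSums (ν : List ℕ+) : (partialSums ν).Finite := by
  induction ν with
  | nil => simp [partialSums_nil]
  | cons a l ih => simpa [partialSums_cons] using ih.image _

lemma partialSums_injective : Function.Injective partialSums := by
  intro ν₁
  induction ν₁ with
  | nil =>
    rintro (_ | ⟨b, m⟩) h
    · rfl
    · rw [partialSums_nil, partialSums_cons] at h
      exact absurd h.symm (Set.insert_nonempty _ _).ne_empty
  | cons a l ih =>
    rintro (_ | ⟨b, m⟩) h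
    · rw [partialSums_nil, partialSums_cons] at h
      exact absurd h (Set.insert_nonempty _ _).ne_empty
    have ha : (a : ℕ) ∈ partialSums (a :: l) := by simp [partialSums_cons]
    have hb : (b : ℕ) ∈ partialSums (b :: m) := by simp [partialSums_cons]
    -- both heads are the least element of the common set
    have hab : a = b := by
      refine PNat.coe_injective (le_antisymm ?_ ?_)
      · exact le_of_mem_partialSums_cons (h ▸ hb)
      · exact le_of_mem_partialSums_cons (h ▸ ha)
    subst hab
    have head_notMem (l' : List ℕ+) : (a : ℕ) ∉ ((a : ℕ) + ·) '' partialSums l' := by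
      rintro ⟨t, ht, hat⟩
      have := pos_of_mem_partialSums ht
      simp only at hat
      omega
    rw [partialSums_cons, partialSums_cons] at h
    have htail := congrArg (· \ {(a : ℕ)}) h
    simp only [Set.insert_sdiff_self_of_notMem (head_notMem _)] at htail
    rw [ih (Set.image_injective.2 (add_right_injective (a : ℕ)) htail)]

lemma exists_prefix_partialSums_eq_inter_Iic (ν : List ℕ+) (N : ℕ) :
    ∃ ν', ν' <+: ν ∧ partialSums ν' = partialSums ν ∩ Set.Iic N := by
  induction ν generalizing N with
  | nil => exact ⟨[], List.prefix_rfl, by simp [partialSums_nil]⟩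
  | cons a l ih =>
    by_cases haN : N < a
    · refine ⟨[], List.nil_prefix, ?_⟩
      ext s
      simp only [partialSums_nil, Set.mem_empty_iff_false, Set.mem_inter_iff, Set.mem_Iic,
        false_iff, not_and, not_le]
      exact fun hs => haN.trans_le (le_of_mem_partialSums_cons hs)
    · obtain ⟨l', hl', hsums⟩ := ih (N - a)
      refine ⟨a :: l', List.cons_prefix_cons.2 ⟨rfl, hl'⟩, ?_⟩
      ext s
      simp only [partialSums_cons, hsums, Set.mem_insert_iff, Set.mem_image, Set.mem_inter_iff,
        Set.mem_Iic]
      grind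

lemma strictMono_sum_range (σ : ℕ → ℕ+) : StrictMono fun n => ∑ i ∈ Finset.range n, (σ i : ℕ) :=
  strictMono_nat_of_lt_succ fun n => by simp [Finset.sum_range_succ, (σ n).pos]

lemma partialSumsInf_infinite (σ : ℕ → ℕ+) : (partialSumsInf σ).Infinite := by
  have hrange : partialSumsInf σ = Set.range fun k => ∑ i ∈ Finset.range (k + 1), (σ i : ℕ) := by
    ext
    simp [partialSumsInf, eq_comm]
  rw [hrange]
  exact Set.infinite_range_of_injective fun _ _ h => by
    simpa using (strictMono_sum_range σ).injective h

lemma ofFn_prefix_ofFn (σ : ℕ → ℕ+) {k K : ℕ} (hk : k ≤ K) :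
    (List.ofFn fun i : Fin k => σ i) <+: List.ofFn fun i : Fin K => σ i := by
  rw [List.prefix_iff_eq_take, List.length_ofFn, ← Fin.ofFn_take_eq_take_ofFn hk]
  rfl

lemma partialSums_ofFn (σ : ℕ → ℕ+) (K : ℕ) :
    partialSums (List.ofFn fun i : Fin K => σ i) =
      partialSumsInf σ ∩ Set.Iic (∑ i ∈ Finset.range K, (σ i : ℕ)) := by
  have hsum (k : ℕ) (hk : k < K) :
      (((List.ofFn fun i : Fin K => σ i).take (k + 1)).map fun p : ℕ+ => (p : ℕ)).sum =
        ∑ i ∈ Finset.range (k + 1), (σ i : ℕ) := by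
    rw [← Fin.ofFn_take_eq_take_ofFn hk, List.map_ofFn, List.sum_ofFn]
    exact Fin.sum_univ_eq_sum_range (fun i => (σ i : ℕ)) (k + 1)
  have hmono := strictMono_sum_range σ
  ext s
  simp only [partialSums, partialSumsInf, List.length_ofFn, Set.mem_inter_iff, Set.mem_ofPred_eq,
    Set.mem_Iic]
  constructor
  · rintro ⟨k, hk, rfl⟩
    rw [hsum k hk]
    exact ⟨⟨k, rfl⟩, hmono.monotone hk⟩
  · rintro ⟨⟨k, rfl⟩, hle⟩
    have hk : k < K := hmono.le_iff_le.1 hle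
    exact ⟨k, hk, (hsum k hk).symm⟩

lemma exists_partialSumsInf_eq {A : Set ℕ} (hA : A.Infinite) (h0 : 0 ∉ A) :
    ∃ σ : ℕ → ℕ+, partialSumsInf σ = A := by
  let f := Nat.nth (· ∈ A)
  have hf : StrictMono f := Nat.nth_strictMono hA
  have hf0 : 0 < f 0 := Nat.pos_of_ne_zero fun h => h0 (h ▸ Nat.nth_mem_of_infinite hA 0)
  have hrange : Set.range f = A := Nat.range_nth_of_infinite hA
  -- `g` is `f` with a `0` prepended, so that the increments of `g` telescope to `f`
  let g : ℕ → ℕ := fun k => if k = 0 then 0 else f (k - 1)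
  have hg : StrictMono g := strictMono_nat_of_lt_succ fun k => by
    rcases k with _ | k
    · simpa [g] using hf0
    · simpa [g] using hf k.lt_succ_self
  refine ⟨fun k => ⟨g (k + 1) - g k, Nat.sub_pos_of_lt (hg k.lt_succ_self)⟩, ?_⟩
  have hsum (k : ℕ) : ∑ i ∈ Finset.range (k + 1), (g (i + 1) - g i) = f k := by
    simpa [g] using Finset.sum_range_tsub hg.monotone (k + 1)
  rw [← hrange]
  ext s
  simp only [partialSumsInf, PNat.mk_coe, hsum, Set.mem_ofPred_eq, Set.mem_range, eq_comm]

lemma setOf_setToBool (S : Set ℕ) : {n | setToBool S n = true} = S := by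
  ext
  simp [setToBool]

lemma setToBool_setOf (A : ℕ → Bool) : setToBool {n | A n = true} = A := by
  funext n
  simp [setToBool]

/-- The members `ν̃` of `M_T` with `ν` finite. -/
def MTFinite (T : Set (List ℕ+)) : Set (Set ℕ) :=
  partialSums '' {ν | ν ∈ T ∨ ν.length ≤ 3}

lemma mem_branches_of_forall_ofFn_mem {T : Set (List ℕ+)} (hT : IsTree T) {σ : ℕ → ℕ+}
    (K₀ : ℕ) (h : ∀ K, K₀ ≤ K → (List.ofFn fun i : Fin K => σ i) ∈ T) : σ ∈ branches T :=
  fun k => hT _ (h (max k K₀) (le_max_right _ _)) _ (ofFn_prefix_ofFn σ (le_max_left _ _))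

lemma inter_Iic_mem_MTFinite_of_mem_MT {T : Set (List ℕ+)} (hT : IsTree T) {A : ℕ → Bool}
    (hA : A ∈ MT T) (N : ℕ) :
    {n | A n = true} ∩ Set.Iic N ∈ MTFinite T := by
  rcases hA with ⟨w, hw, rfl⟩ | ⟨σ, hσ, rfl⟩
  · obtain ⟨ν, hν, hsums⟩ := exists_prefix_partialSums_eq_inter_Iic w N
    refine ⟨ν, hw.imp (fun hw => hT w hw ν hν) (fun hw => hν.length_le.trans hw), ?_⟩
    rw [hsums, setOf_setToBool]
  · set w := List.ofFn fun i : Fin (N + 1) => σ i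
    obtain ⟨ν, hν, hsums⟩ := exists_prefix_partialSums_eq_inter_Iic w N
    refine ⟨ν, Or.inl (hT w (hσ (N + 1)) ν hν), ?_⟩
    have hN : N ≤ ∑ i ∈ Finset.range (N + 1), (σ i : ℕ) :=
      (Nat.le_succ N).trans ((strictMono_sum_range σ).id_le _)
    rw [hsums, setOf_setToBool, partialSums_ofFn, Set.inter_assoc, Set.Iic_inter_Iic,
      inf_eq_right.2 hN]

lemma mem_MT_of_forall_inter_Iic_mem_MTFinite {T : Set (List ℕ+)} (hT : IsTree T) {A : ℕ → Bool}
    (h : ∀ N, {n | A n = true} ∩ Set.Iic N ∈ MTFinite T) : A ∈ MT T := by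
  obtain ⟨S, rfl⟩ : ∃ S, setToBool S = A := ⟨_, setToBool_setOf A⟩
  simp only [setOf_setToBool] at h
  by_cases hS : S.Finite
  · obtain ⟨N, hN⟩ := hS.bddAbove
    obtain ⟨ν, hν, hsums⟩ := h N
    exact Or.inl ⟨ν, hν, congrArg setToBool (hsums.trans (Set.inter_eq_left.2 hN))⟩
  · have h0 : 0 ∉ S := fun h0 => by
      obtain ⟨ν, -, hsums⟩ := h 0
      have : 0 ∈ partialSums ν := hsums ▸ ⟨h0, Set.mem_Iic.2 le_rfl⟩
      exact (pos_of_mem_partialSums this).false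
    obtain ⟨σ, rfl⟩ := exists_partialSumsInf_eq hS h0
    refine Or.inr ⟨σ, mem_branches_of_forall_ofFn_mem hT 4 fun K hK => ?_, rfl⟩
    obtain ⟨ν, hν, hsums⟩ := h (∑ i ∈ Finset.range K, (σ i : ℕ))
    rw [← partialSums_ofFn] at hsums
    obtain rfl := partialSums_injective hsums
    exact hν.resolve_right (by simp only [List.length_ofFn]; omega)

lemma isClosed_setOf_inter_Iic_mem (𝒮 : Set (Set ℕ)) (N : ℕ) :
    IsClosed {A : ℕ → Bool | {n | A n = true} ∩ Set.Iic N ∈ 𝒮} := by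
  have hpre : {A : ℕ → Bool | {n | A n = true} ∩ Set.Iic N ∈ 𝒮} =
      (Set.Iic N).domRestrict ⁻¹' {f | {n | ∃ h : n ∈ Set.Iic N, f ⟨n, h⟩ = true} ∈ 𝒮} := by
    ext A
    simp only [Set.mem_preimage, Set.mem_ofPred_eq, Set.domRestrict_apply, exists_prop,
      Set.inter_def, and_comm]
  rw [hpre]
  exact (isClosed_discrete _).preimage (continuous_pi fun i => continuous_apply _)

theorem isClosed_MT {T : Set (List ℕ+)} (hT : IsTree T) : IsClosed (MT T) := by
  have hMT : MT T = ⋂ N, {A : ℕ → Bool | {n | A n = true} ∩ Set.Iic N ∈ MTFinite T} := by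
    ext A
    simp only [Set.mem_iInter, Set.mem_ofPred_eq]
    exact ⟨inter_Iic_mem_MTFinite_of_mem_MT hT, mem_MT_of_forall_inter_Iic_mem_MTFinite hT⟩
  rw [hMT]
  exact isClosed_iInter (isClosed_setOf_inter_Iic_mem _)

/-- For every tree `T` on the positive naturals, `M_T` is a compact subset of `2^ℕ`, and it
contains an infinite set iff `T` is ill-founded (has an infinite branch). -/
theorem stmt13 (T : Set (List ℕ+)) (hT : IsTree T) :
    IsCompact (MT T) ∧
    ((∃ A ∈ MT T, {n : ℕ | A n = true}.Infinite) ↔ (branches T).Nonempty) := by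
  refine ⟨(isClosed_MT hT).isCompact, ⟨?_, ?_⟩⟩
  · rintro ⟨A, ⟨ν, -, rfl⟩ | ⟨σ, hσ, -⟩, hinf⟩
    · rw [setOf_setToBool] at hinf
      exact absurd (finite_partialSums ν) hinf
    · exact ⟨σ, hσ⟩
  · rintro ⟨σ, hσ⟩
    refine ⟨_, Or.inr ⟨σ, hσ, rfl⟩, ?_⟩
    rw [setOf_setToBool]
    exact partialSumsInf_infinite σ
end

section
/- Let X be a Banach space and (aₙ*) a bounded sequence in X* with ca(aₙ*) > 0, and let Q be the set of weak*-cluster points of (aₙ*). If diam Q ≥ (1/6)·ca(aₙ*), then δ(aₙ*) ≥ (1/6)·ca(aₙ*). -/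
/-!
Evaluating at a fixed `x` is weak*-continuous, so for any two weak*-cluster points `g, h` the
numbers `g x` and `h x` lie in the closure of every tail `{aₙ* x : n ≥ m}`; hence
`|(g - h) x| ≤ inf_m diam {aₙ* x : n ≥ m} ≤ δ(aₙ*)` for `‖x‖ ≤ 1`. Taking the supremum over `x`
gives `‖g - h‖ ≤ δ(aₙ*)`, i.e. `diam Q ≤ δ(aₙ*)`.
-/

open Filter

/-- `ca(xₙ) = inf_m diam {xₙ : n ≥ m}` for a sequence in a metric space. -/
noncomputable def ca {Y : Type*} [PseudoMetricSpace Y] (x : ℕ → Y) : ℝ :=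
  ⨅ m : ℕ, Metric.diam {y | ∃ n, m ≤ n ∧ y = x n}

/-- `δ(aₙ*) = sup_{x ∈ B_X} inf_m diam {aₙ*(x) : n ≥ m}` for a sequence of functionals,
evaluated against the closed unit ball of the predual. -/
noncomputable def deltaPre {X : Type*} [NormedAddCommGroup X] [NormedSpace ℝ X]
    (a : ℕ → StrongDual ℝ X) : ℝ :=
  ⨆ x : {x : X // ‖x‖ ≤ 1}, ⨅ m : ℕ, Metric.diam {r : ℝ | ∃ n, m ≤ n ∧ r = a n x.1}

/-- `δ(yₙ) = sup_{‖f‖ ≤ 1} inf_m diam {f(yₙ) : n ≥ m}` for a sequence in a normed space,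
the supremum being over functionals of norm at most `1`. -/
noncomputable def deltaDual {Y : Type*} [NormedAddCommGroup Y] [NormedSpace ℝ Y]
    (y : ℕ → Y) : ℝ :=
  ⨆ f : {f : StrongDual ℝ Y // ‖f‖ ≤ 1},
    ⨅ m : ℕ, Metric.diam {r : ℝ | ∃ n, m ≤ n ∧ r = f.1 (y n)}

/-- The set of weak*-cluster points of a sequence of functionals. -/
def wkStarClusterPts {X : Type*} [NormedAddCommGroup X] [NormedSpace ℝ X]
    (a : ℕ → StrongDual ℝ X) : Set (StrongDual ℝ X) :=
  {g | MapClusterPt (StrongDual.toWeakDual g) atTop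
    (fun n => StrongDual.toWeakDual (a n))}

section ClusterPoints

variable {X : Type*} [NormedAddCommGroup X] [NormedSpace ℝ X] {a : ℕ → StrongDual ℝ X}

theorem apply_mem_closure_tail_of_mem_wkStarClusterPts {g : StrongDual ℝ X}
    (hg : g ∈ wkStarClusterPts a) (x : X) (m : ℕ) :
    g x ∈ closure {r : ℝ | ∃ n, m ≤ n ∧ r = a n x} := by
  have hcluster : MapClusterPt (g x) atTop (fun n => a n x) :=
    MapClusterPt.continuousAt_comp (f := fun φ : WeakDual ℝ X => φ x)
      (WeakDual.eval_continuous x).continuousAt hg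
  rw [mem_closure_iff_clusterPt]
  refine ClusterPt.mono hcluster (le_principal_iff.2 (mem_map.2 ?_))
  exact eventually_atTop.2 ⟨m, fun n hn => ⟨n, hn, rfl⟩⟩

variable {K : ℝ} (hK : ∀ n, ‖a n‖ ≤ K)
include hK

theorem tail_apply_subset_closedBall {x : X} (hx : ‖x‖ ≤ 1) (m : ℕ) :
    {r : ℝ | ∃ n, m ≤ n ∧ r = a n x} ⊆ Metric.closedBall 0 K := by
  rintro r ⟨n, -, rfl⟩
  rw [Metric.mem_closedBall, dist_zero_right]
  calc ‖a n x‖ ≤ ‖a n‖ * ‖x‖ := (a n).le_opNorm x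
    _ ≤ K * 1 := mul_le_mul (hK n) hx (norm_nonneg x) ((norm_nonneg _).trans (hK 0))
    _ = K := mul_one K

theorem bddAbove_range_iInf_diam_tail_apply :
    BddAbove (Set.range fun x : {x : X // ‖x‖ ≤ 1} =>
      ⨅ m : ℕ, Metric.diam {r : ℝ | ∃ n, m ≤ n ∧ r = a n x.1}) := by
  refine ⟨2 * K, ?_⟩
  rintro _ ⟨x, rfl⟩
  calc ⨅ m : ℕ, Metric.diam {r : ℝ | ∃ n, m ≤ n ∧ r = a n x.1}
      ≤ Metric.diam {r : ℝ | ∃ n, 0 ≤ n ∧ r = a n x.1} :=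
        ciInf_le ⟨0, by rintro _ ⟨m, rfl⟩; exact Metric.diam_nonneg⟩ 0
    _ ≤ Metric.diam (Metric.closedBall (0 : ℝ) K) :=
        Metric.diam_mono (tail_apply_subset_closedBall hK x.2 0) Metric.isBounded_closedBall
    _ ≤ 2 * K := Metric.diam_closedBall ((norm_nonneg _).trans (hK 0))

theorem deltaPre_nonneg : 0 ≤ deltaPre a :=
  (le_ciInf fun _ => Metric.diam_nonneg).trans
    (le_ciSup (bddAbove_range_iInf_diam_tail_apply hK) ⟨0, by simp⟩)

theorem dist_apply_le_diam_tail {g h : StrongDual ℝ X} (hg : g ∈ wkStarClusterPts a)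
    (hh : h ∈ wkStarClusterPts a) {x : X} (hx : ‖x‖ ≤ 1) (m : ℕ) :
    dist (g x) (h x) ≤ Metric.diam {r : ℝ | ∃ n, m ≤ n ∧ r = a n x} := by
  rw [← Metric.diam_closure]
  exact Metric.dist_le_diam_of_mem
    (Metric.isBounded_closedBall.subset (tail_apply_subset_closedBall hK hx m)).closure
    (apply_mem_closure_tail_of_mem_wkStarClusterPts hg x m)
    (apply_mem_closure_tail_of_mem_wkStarClusterPts hh x m)

theorem dist_apply_le_deltaPre {g h : StrongDual ℝ X} (hg : g ∈ wkStarClusterPts a)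
    (hh : h ∈ wkStarClusterPts a) {x : X} (hx : ‖x‖ ≤ 1) :
    dist (g x) (h x) ≤ deltaPre a :=
  (le_ciInf (dist_apply_le_diam_tail hK hg hh hx)).trans
    (le_ciSup (bddAbove_range_iInf_diam_tail_apply hK) ⟨x, hx⟩)

theorem dist_le_deltaPre {g h : StrongDual ℝ X} (hg : g ∈ wkStarClusterPts a)
    (hh : h ∈ wkStarClusterPts a) : dist g h ≤ deltaPre a := by
  rw [dist_eq_norm]
  refine le_of_forall_lt fun r hr => ?_
  obtain ⟨x, hx, hrx⟩ := (g - h).exists_lt_apply_of_lt_opNorm hr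
  calc r < ‖(g - h) x‖ := hrx
    _ = dist (g x) (h x) := by rw [dist_eq_norm, sub_apply]
    _ ≤ deltaPre a := dist_apply_le_deltaPre hK hg hh hx.le

theorem diam_wkStarClusterPts_le_deltaPre : Metric.diam (wkStarClusterPts a) ≤ deltaPre a :=
  Metric.diam_le_of_forall_dist_le (deltaPre_nonneg hK) fun _ hg _ hh => dist_le_deltaPre hK hg hh

end ClusterPoints

theorem stmt16_general {X : Type} [NormedAddCommGroup X] [NormedSpace ℝ X]
    (a : ℕ → StrongDual ℝ X) (hbdd : ∃ K : ℝ, ∀ n, ‖a n‖ ≤ K)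
    (hQ : (1 / 6 : ℝ) * ca a ≤ Metric.diam (wkStarClusterPts a)) :
    (1 / 6 : ℝ) * ca a ≤ deltaPre a := by
  obtain ⟨K, hK⟩ := hbdd
  exact hQ.trans (diam_wkStarClusterPts_le_deltaPre hK)

/-- If `(aₙ*)` is a bounded sequence in `X*` with `ca(aₙ*) > 0` whose set `Q` of
weak*-cluster points satisfies `diam Q ≥ (1/6)·ca(aₙ*)`, then `δ(aₙ*) ≥ (1/6)·ca(aₙ*)`. -/
theorem stmt16 {X : Type} [NormedAddCommGroup X] [NormedSpace ℝ X] [CompleteSpace X]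
    (a : ℕ → StrongDual ℝ X) (hbdd : ∃ K : ℝ, ∀ n, ‖a n‖ ≤ K)
    (hca : 0 < ca a)
    (hQ : (1 / 6 : ℝ) * ca a ≤ Metric.diam (wkStarClusterPts a)) :
    (1 / 6 : ℝ) * ca a ≤ deltaPre a :=
  stmt16_general a hbdd hQ
end
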